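/- arXiv:2211.05106 — 8 statements merged into one kernel-verified Lean document; each statement's English description precedes it below -/
import Mathlib

section
/- Let p be a prime and n ≥ 1 an integer. For every g ∈ GL_n(ℚ_p) there exists an invertible matrix γ ∈ GL_n(ℚ) such that all entries of γ and of γ⁻¹ lie in ℤ[1/p], and such that, viewing γ inside GL_n(ℚ_p) via the inclusion ℚ ⊆ ℚ_p, the matrix γ⁻¹ · g lies in GL_n(ℤ_p), i.e. all entries of γ⁻¹ · g and of its inverse lie in ℤ_p. (Equivalently, GL_n(ℝ) × GL_n(ℚ_p) = GL_n(ℤ[1/p]) · (GL_n(ℝ) × GL_n(ℤ_p)) with GL_n(ℤ[1/p]) embedded diagonally: the group GL_n over ℚ has class number one.) -/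
open Matrix

noncomputable section

/-- `q` lies in `ℤ[1/p]`, i.e. is of the form `a / p ^ m`. -/
def IsZInvP (p : ℕ) (q : ℚ) : Prop := ∃ (a : ℤ) (m : ℕ), q = (a : ℚ) / (p : ℚ) ^ m

/-- `x ∈ ℚ_[p]` lies in the ring of `p`-adic integers `ℤ_[p]`. -/
def InZp {p : ℕ} [Fact p.Prime] (x : ℚ_[p]) : Prop := ∃ z : ℤ_[p], (z : ℚ_[p]) = x

section Aux

open Submodule in
/-- Lattice lemma over `ℤ`. -/
lemma lattice_basis_aux (q : ℤ) (hq : q ≠ 0) (n : ℕ) (A : Matrix (Fin n) (Fin n) ℤ) :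
    ∃ (B C1 C2 C3 C4 : Matrix (Fin n) (Fin n) ℤ),
      A = B * C1 ∧
      B = A * C2 + q • C3 ∧
      q • (1 : Matrix (Fin n) (Fin n) ℤ) = B * C4 := by
  classical
  set e := Pi.basisFun ℤ (Fin n) with he
  set N1 : Submodule ℤ (Fin n → ℤ) := span ℤ (Set.range Aᵀ) with hN1
  set N2 : Submodule ℤ (Fin n → ℤ) := span ℤ (Set.range (fun j => q • e j)) with hN2
  set M : Submodule ℤ (Fin n → ℤ) := N1 ⊔ N2 with hM
  obtain ⟨m, bM⟩ := Submodule.basisOfPid e M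
  have hmn : m = n := by
    have h1 : m ≤ n := by
      have := (bM.linearIndependent.map' M.subtype (Submodule.ker_subtype M)).fintype_card_le_finrank
      simpa using this
    have h2 : n ≤ m := by
      have hmem : ∀ j, q • e j ∈ M := fun j =>
        le_sup_right (α := Submodule ℤ (Fin n → ℤ)) (subset_span ⟨j, rfl⟩)
      have hind : LinearIndependent ℤ (fun j : Fin n => (⟨q • e j, hmem j⟩ : M)) := by
        apply LinearIndependent.of_comp M.subtype
        have := e.linearIndependent.map' (q • LinearMap.id)
          (by rw [LinearMap.ker_eq_bot]; exact smul_right_injective _ hq)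
        convert this using 2 with j
        · rfl
        · rfl
        · rfl
        · exact Subsingleton.elim _ _
      have := hind.fintype_card_le_finrank
      simpa [Module.finrank_eq_card_basis bM] using this
    omega
  obtain ⟨b⟩ : Nonempty (Module.Basis (Fin n) ℤ M) := ⟨bM.reindex (finCongr hmn)⟩
  clear bM hmn
  set B : Matrix (Fin n) (Fin n) ℤ := Matrix.of (fun i j => (b j : Fin n → ℤ) i) with hB
  have hrep : ∀ x ∈ M, ∃ c : Fin n → ℤ, B.mulVec c = x := by
    intro x hx
    refine ⟨fun j => b.repr ⟨x, hx⟩ j, ?_⟩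
    have h2 := congrArg (Submodule.subtype M) (b.sum_repr ⟨x, hx⟩)
    simp only [map_sum, LinearMap.map_smul] at h2
    funext i
    have h3 := congrFun h2 i
    simp only [Submodule.coe_subtype, Finset.sum_apply, Pi.smul_apply, smul_eq_mul] at h3
    simpa [Matrix.mulVec, dotProduct, hB, mul_comm] using h3
  have hAcol : ∀ j, Aᵀ j ∈ M := fun j =>
    le_sup_left (α := Submodule ℤ (Fin n → ℤ)) (subset_span ⟨j, rfl⟩)
  have hecol : ∀ j, q • (e j : Fin n → ℤ) ∈ M := fun j =>
    le_sup_right (α := Submodule ℤ (Fin n → ℤ)) (subset_span ⟨j, rfl⟩)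
  have hC1 : ∃ C1, A = B * C1 := by
    choose c hc using fun j => hrep _ (hAcol j)
    refine ⟨Matrix.of (fun i j => c j i), ?_⟩
    ext i j
    have := congrFun (hc j) i
    simpa [Matrix.mulVec, dotProduct, Matrix.mul_apply] using this.symm
  have hC4 : ∃ C4, q • (1 : Matrix (Fin n) (Fin n) ℤ) = B * C4 := by
    choose c hc using fun j => hrep _ (hecol j)
    refine ⟨Matrix.of (fun i j => c j i), ?_⟩
    ext i j
    have := congrFun (hc j) i
    simp only [Matrix.mulVec, dotProduct] at this
    simp only [Matrix.smul_apply, Matrix.one_apply, Matrix.mul_apply, Matrix.of_apply, smul_eq_mul]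
    rw [this]
    simp [he, Pi.single_apply, eq_comm]
  have hBdec : ∃ C2 C3, B = A * C2 + q • C3 := by
    have hcol : ∀ j, ∃ (u w : Fin n → ℤ), (b j : Fin n → ℤ) = A.mulVec u + q • w := by
      intro j
      obtain ⟨y, hy, z, hz, hyz⟩ := Submodule.mem_sup.mp (b j).2
      erw [hN1, mem_span_range_iff_exists_fun] at hy
      rw [hN2, mem_span_range_iff_exists_fun] at hz
      obtain ⟨u, hu⟩ := hy
      obtain ⟨w, hw⟩ := hz
      refine ⟨u, w, ?_⟩
      rw [← hyz, ← hu, ← hw]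
      congr 1
      · funext i
        simp [Matrix.mulVec, dotProduct, mul_comm]
      · funext i
        simp [he, Finset.sum_apply, Pi.single_apply, smul_eq_mul, mul_comm,
          Finset.sum_ite_eq', Finset.sum_ite_eq]
    choose u w hc using hcol
    refine ⟨Matrix.of (fun i j => u j i), Matrix.of (fun i j => w j i), ?_⟩
    ext i j
    have := congrFun (hc j) i
    simpa [hB, Matrix.mulVec, dotProduct, Matrix.mul_apply] using this
  obtain ⟨C1, h1⟩ := hC1
  obtain ⟨C2, C3, h23⟩ := hBdec
  obtain ⟨C4, h4⟩ := hC4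
  exact ⟨B, C1, C2, C3, C4, h1, h23, h4⟩

variable {p : ℕ} [Fact p.Prime] {n : ℕ}

lemma inZp_iff {x : ℚ_[p]} : InZp x ↔ ‖x‖ ≤ 1 := by
  constructor
  · rintro ⟨z, rfl⟩
    rw [← PadicInt.norm_def]; exact z.norm_le_one
  · intro h; exact ⟨⟨x, h⟩, rfl⟩

/-- entries of a product of entrywise-integral matrices are integral -/
lemma matInt_mul {X Y : Matrix (Fin n) (Fin n) ℚ_[p]}
    (hX : ∀ i j, ‖X i j‖ ≤ 1) (hY : ∀ i j, ‖Y i j‖ ≤ 1) :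
    ∀ i j, ‖(X * Y) i j‖ ≤ 1 := by
  intro i j
  rw [Matrix.mul_apply]
  refine IsUltrametricDist.norm_sum_le_of_forall_le_of_nonneg zero_le_one (fun k _ => ?_)
  rw [norm_mul]
  exact mul_le_one₀ (hX i k) (norm_nonneg _) (hY k j)

lemma matInt_add {X Y : Matrix (Fin n) (Fin n) ℚ_[p]}
    (hX : ∀ i j, ‖X i j‖ ≤ 1) (hY : ∀ i j, ‖Y i j‖ ≤ 1) :
    ∀ i j, ‖(X + Y) i j‖ ≤ 1 := by
  intro i j
  refine le_trans (Padic.nonarchimedean _ _) ?_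
  exact max_le (hX i j) (hY i j)

lemma matInt_smul {c : ℚ_[p]} {X : Matrix (Fin n) (Fin n) ℚ_[p]}
    (hc : ‖c‖ ≤ 1) (hX : ∀ i j, ‖X i j‖ ≤ 1) :
    ∀ i j, ‖(c • X) i j‖ ≤ 1 := by
  intro i j
  rw [Matrix.smul_apply, smul_eq_mul, norm_mul]
  exact mul_le_one₀ hc (norm_nonneg _) (hX i j)

end Aux

/-- `GL_n` over `ℚ` has class number one: for every `g ∈ GL_n(ℚ_p)` there exists
`γ ∈ GL_n(ℤ[1/p])` (i.e. an invertible rational matrix with all entries of `γ` and `γ⁻¹`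
in `ℤ[1/p]`) such that `γ⁻¹ · g ∈ GL_n(ℤ_p)`, i.e. all entries of `γ⁻¹ · g` and of its
inverse `g⁻¹ · γ` lie in `ℤ_p`. -/
theorem stmt4 (p : ℕ) [Fact p.Prime] (n : ℕ) (hn : 1 ≤ n) (g : GL (Fin n) ℚ_[p]) :
    ∃ γ : GL (Fin n) ℚ,
      (∀ i j, IsZInvP p ((γ : Matrix (Fin n) (Fin n) ℚ) i j)) ∧
      (∀ i j, IsZInvP p (((γ⁻¹ : GL (Fin n) ℚ) : Matrix (Fin n) (Fin n) ℚ) i j)) ∧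
      (∀ i j, InZp (((((γ⁻¹ : GL (Fin n) ℚ) : Matrix (Fin n) (Fin n) ℚ).map
          (fun q => (q : ℚ_[p]))) * (g : Matrix (Fin n) (Fin n) ℚ_[p])) i j)) ∧
      (∀ i j, InZp (((((g⁻¹ : GL (Fin n) ℚ_[p]) : Matrix (Fin n) (Fin n) ℚ_[p])) *
          ((γ : Matrix (Fin n) (Fin n) ℚ).map (fun q => (q : ℚ_[p])))) i j)) := by
  have hp : p.Prime := Fact.out
  have hp1R : (1:ℝ) < (p:ℝ) := by exact_mod_cast hp.one_lt
  have hpR : (0:ℝ) < (p:ℝ) := by positivity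
  set G : Matrix (Fin n) (Fin n) ℚ_[p] := (g : Matrix (Fin n) (Fin n) ℚ_[p]) with hG
  have hGdet : G.det ≠ 0 := by
    have : IsUnit G := ⟨g, rfl⟩
    exact ((Matrix.isUnit_iff_isUnit_det G).mp this).ne_zero
  -- choose r
  have hentry : ∀ i j, ∃ k : ℕ, ‖G i j‖ ≤ (p:ℝ)^k := by
    intro i j
    obtain ⟨k, hk⟩ := pow_unbounded_of_one_lt (‖G i j‖) hp1R
    exact ⟨k, hk.le⟩
  choose k hk using hentry
  set r : ℕ := Finset.sup Finset.univ (fun ij : Fin n × Fin n => k ij.1 ij.2) with hr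
  set h : Matrix (Fin n) (Fin n) ℚ_[p] := ((p:ℚ_[p])^r) • G with hh
  have hPne : ((p:ℚ_[p])) ≠ 0 := by exact_mod_cast hp.ne_zero
  have hnorm_h : ∀ i j, ‖h i j‖ ≤ 1 := by
    intro i j
    rw [hh, Matrix.smul_apply, smul_eq_mul, norm_mul, norm_pow, Padic.norm_p]
    have hkr : k i j ≤ r := Finset.le_sup (f := fun ij : Fin n × Fin n => k ij.1 ij.2)
      (Finset.mem_univ (i, j))
    have h1 : ‖G i j‖ ≤ (p:ℝ)^r := (hk i j).trans (pow_le_pow_right₀ hp1R.le hkr)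
    calc ((p:ℝ)⁻¹)^r * ‖G i j‖ ≤ ((p:ℝ)⁻¹)^r * (p:ℝ)^r := by
          exact mul_le_mul_of_nonneg_left h1 (by positivity)
      _ = 1 := by rw [← mul_pow]; simp [inv_mul_cancel₀ hpR.ne']
  have hhdet : h.det ≠ 0 := by
    rw [hh, Matrix.det_smul]
    exact mul_ne_zero (pow_ne_zero _ (pow_ne_zero _ hPne)) hGdet
  -- choose s
  obtain ⟨s, hs⟩ : ∃ s : ℕ, ‖(h.det)⁻¹‖ ≤ (p:ℝ)^s := by
    obtain ⟨s, hs⟩ := pow_unbounded_of_one_lt (‖(h.det)⁻¹‖) hp1R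
    exact ⟨s, hs.le⟩
  -- lift h to ℤ_[p]
  set cRH : ℤ_[p] →+* ℚ_[p] := PadicInt.Coe.ringHom with hcRH
  set H : Matrix (Fin n) (Fin n) ℤ_[p] :=
    Matrix.of (fun i j => (⟨h i j, hnorm_h i j⟩ : ℤ_[p])) with hHdef
  have hHh : cRH.mapMatrix H = h := by ext i j; rfl
  have hadj : ∀ i j, ‖h.adjugate i j‖ ≤ 1 := by
    intro i j
    rw [← hHh, ← RingHom.map_adjugate]
    show ‖((H.adjugate i j : ℤ_[p]) : ℚ_[p])‖ ≤ 1
    rw [← PadicInt.norm_def]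
    exact PadicInt.norm_le_one _
  -- integer approximation A of h
  set A : Matrix (Fin n) (Fin n) ℤ := Matrix.of (fun i j => ((H i j).appr (s+1) : ℤ)) with hAdef
  set Aq : Matrix (Fin n) (Fin n) ℚ_[p] := A.map (fun z : ℤ => (z : ℚ_[p])) with hAq
  have happrox : ∀ i j, ‖Aq i j - h i j‖ ≤ (p:ℝ)^(-(s+1:ℤ)) := by
    intro i j
    have h1 : ‖H i j - ((H i j).appr (s+1) : ℤ_[p])‖ ≤ (p:ℝ)^(-((s+1:ℕ)):ℤ) := by
      rw [PadicInt.norm_le_pow_iff_mem_span_pow]; exact (H i j).appr_spec (s+1)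
    have h2 : Aq i j - h i j = -(((H i j - ((H i j).appr (s+1) : ℤ_[p])) : ℤ_[p]) : ℚ_[p]) := by
      have hAij : Aq i j = (((H i j).appr (s+1) : ℤ_[p]) : ℚ_[p]) := by
        simp [hAq, hAdef]
      have hhij : h i j = ((H i j : ℤ_[p]) : ℚ_[p]) := rfl
      rw [hAij, hhij]
      push_cast
      ring
    rw [h2, norm_neg, ← PadicInt.norm_def]
    exact_mod_cast h1
  -- the correction matrix F = h⁻¹ (Aq - h), entries of norm < 1
  set F : Matrix (Fin n) (Fin n) ℚ_[p] := h⁻¹ * (Aq - h) with hF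
  have hFnorm : ∀ i j, ‖F i j‖ ≤ ((p:ℝ))⁻¹ := by
    intro i j
    have hF2 : F i j = h.det⁻¹ * ((h.adjugate * (Aq - h)) i j) := by
      rw [hF, Matrix.inv_def, Matrix.smul_mul, Matrix.smul_apply, smul_eq_mul]
      congr 1
      rw [Ring.inverse_eq_inv]
    rw [hF2, norm_mul]
    have hsum : ‖(h.adjugate * (Aq - h)) i j‖ ≤ (p:ℝ)^(-(s+1:ℤ)) := by
      rw [Matrix.mul_apply]
      refine IsUltrametricDist.norm_sum_le_of_forall_le_of_nonneg (by positivity) (fun k _ => ?_)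
      rw [norm_mul]
      calc ‖h.adjugate i k‖ * ‖(Aq - h) k j‖ ≤ 1 * ((p:ℝ)^(-(s+1:ℤ))) := by
            refine mul_le_mul (hadj i k) ?_ (norm_nonneg _) zero_le_one
            simpa using happrox k j
        _ = (p:ℝ)^(-(s+1:ℤ)) := one_mul _
    calc ‖h.det⁻¹‖ * ‖(h.adjugate * (Aq - h)) i j‖ ≤ (p:ℝ)^(s:ℤ) * (p:ℝ)^(-(s+1:ℤ)) := by
          refine mul_le_mul ?_ hsum (norm_nonneg _) (by positivity)
          exact_mod_cast hs
      _ = ((p:ℝ))⁻¹ := by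
          rw [← zpow_add₀ hpR.ne']
          norm_num
  have hFlt : ∀ i j, ‖F i j‖ < 1 := fun i j =>
    lt_of_le_of_lt (hFnorm i j) (by rw [inv_lt_one_iff₀]; right; exact hp1R)
  -- lift 1 + F to an invertible matrix K over ℤ_[p]
  set F' : Matrix (Fin n) (Fin n) ℤ_[p] :=
    Matrix.of (fun i j => (⟨F i j, (hFlt i j).le⟩ : ℤ_[p])) with hF'def
  set K : Matrix (Fin n) (Fin n) ℤ_[p] := 1 + F' with hKdef
  have hKq : cRH.mapMatrix K = 1 + F := by
    rw [hKdef, map_add, _root_.map_one]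
    congr 1
  have hAK : Aq = h * (cRH.mapMatrix K) := by
    rw [hKq, Matrix.mul_add, Matrix.mul_one, hF, ← Matrix.mul_assoc,
      Matrix.mul_nonsing_inv _ (isUnit_iff_ne_zero.mpr hhdet), Matrix.one_mul]
    abel
  have hKunit : IsUnit K := by
    rw [Matrix.isUnit_iff_isUnit_det]
    have hdet1 : PadicInt.toZMod K.det = 1 := by
      rw [RingHom.map_det]
      have : (PadicInt.toZMod (p := p)).mapMatrix K = 1 := by
        rw [hKdef, map_add, _root_.map_one]
        have : (PadicInt.toZMod (p := p)).mapMatrix F' = 0 := by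
          ext i j
          simp only [RingHom.mapMatrix_apply, Matrix.map_apply, Matrix.zero_apply]
          have hnlt : ‖F' i j‖ < 1 := by
            have he' : (F' i j : ℚ_[p]) = F i j := rfl
            rw [PadicInt.norm_def, he']
            exact hFlt i j
          rw [← RingHom.mem_ker, PadicInt.ker_toZMod, IsLocalRing.mem_maximalIdeal,
            PadicInt.mem_nonunits]
          exact hnlt
        rw [this, add_zero]
      rw [this, Matrix.det_one]
    by_contra hx
    rw [PadicInt.not_isUnit_iff, ← PadicInt.mem_nonunits, ← IsLocalRing.mem_maximalIdeal,
      ← PadicInt.ker_toZMod, RingHom.mem_ker, hdet1] at hx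
    exact one_ne_zero hx
  obtain ⟨Ku, hKu⟩ := hKunit
  set K' : Matrix (Fin n) (Fin n) ℤ_[p] := ((Ku⁻¹ : (Matrix (Fin n) (Fin n) ℤ_[p])ˣ) : Matrix (Fin n) (Fin n) ℤ_[p]) with hK'def
  have hKK' : K * K' = 1 := by rw [hK'def, ← hKu]; exact Ku.mul_inv
  have hK'K : K' * K = 1 := by rw [hK'def, ← hKu]; exact Ku.inv_mul
  -- the lattice step over ℤ
  have hqZ : ((p:ℤ)^(s+1)) ≠ 0 := pow_ne_zero _ (by exact_mod_cast hp.ne_zero)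
  obtain ⟨B, C1, C2, C3, C4, hBC1, hBC23, hBC4⟩ := lattice_basis_aux ((p:ℤ)^(s+1)) hqZ n A
  -- map everything to ℚ_[p]
  set ψ : ℤ →+* ℚ_[p] := Int.castRingHom ℚ_[p] with hψ
  have hAqψ : Aq = ψ.mapMatrix A := rfl
  set Bq : Matrix (Fin n) (Fin n) ℚ_[p] := ψ.mapMatrix B with hBqdef
  set C1q : Matrix (Fin n) (Fin n) ℚ_[p] := ψ.mapMatrix C1 with hC1qdef
  set C2q : Matrix (Fin n) (Fin n) ℚ_[p] := ψ.mapMatrix C2 with hC2qdef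
  set C3q : Matrix (Fin n) (Fin n) ℚ_[p] := ψ.mapMatrix C3 with hC3qdef
  set C4q : Matrix (Fin n) (Fin n) ℚ_[p] := ψ.mapMatrix C4 with hC4qdef
  have hsmulmap : ∀ X : Matrix (Fin n) (Fin n) ℤ,
      ψ.mapMatrix (((p:ℤ)^(s+1)) • X) = ((p:ℚ_[p])^(s+1)) • ψ.mapMatrix X := by
    intro X
    ext i j
    simp only [RingHom.mapMatrix_apply, Matrix.map_apply, Matrix.smul_apply, smul_eq_mul, hψ,
      Int.coe_castRingHom]
    push_cast
    ring
  have hq1 : Aq = Bq * C1q := by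
    rw [hAqψ, hBC1, _root_.map_mul]
  have hq2 : Bq = Aq * C2q + ((p:ℚ_[p])^(s+1)) • C3q := by
    rw [hBqdef, hBC23, _root_.map_add, _root_.map_mul, hsmulmap, hAqψ]
  have hq3 : ((p:ℚ_[p])^(s+1)) • (1 : Matrix (Fin n) (Fin n) ℚ_[p]) = Bq * C4q := by
    have := congrArg (ψ.mapMatrix) hBC4
    rwa [hsmulmap, _root_.map_one, _root_.map_mul] at this
  -- nonvanishing determinants
  have hKdetq : cRH (K.det) ≠ 0 := by
    have hu : IsUnit K.det := (Matrix.isUnit_iff_isUnit_det K).mp ⟨Ku, hKu⟩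
    intro h0
    exact hu.ne_zero (Subtype.coe_injective (h0.trans (map_zero cRH).symm))
  have hAqdet : Aq.det ≠ 0 := by
    rw [hAK, Matrix.det_mul]
    refine mul_ne_zero hhdet ?_
    rw [← RingHom.map_det]
    exact hKdetq
  have hBqdet : Bq.det ≠ 0 := by
    intro h0
    apply hAqdet
    rw [hq1, Matrix.det_mul, h0, zero_mul]
  have hBdet : B.det ≠ 0 := by
    intro h0
    apply hBqdet
    rw [hBqdef, ← RingHom.map_det, h0]
    simp
  -- the determinant of B is ± a power of p
  have hdvd : B.det ∣ (p:ℤ)^((s+1)*n) := by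
    refine ⟨C4.det, ?_⟩
    have := congrArg Matrix.det hBC4
    rwa [Matrix.det_smul, Matrix.det_one, mul_one, Matrix.det_mul, ← pow_mul,
      Fintype.card_fin] at this
  have hnatdvd : (B.det).natAbs ∣ p^((s+1)*n) := by
    have := Int.natAbs_dvd_natAbs.mpr hdvd
    rwa [Int.natAbs_pow, Int.natAbs_natCast] at this
  obtain ⟨t, _, ht⟩ := (Nat.dvd_prime_pow hp).mp hnatdvd
  have hsign : B.det = (p:ℤ)^t ∨ B.det = -((p:ℤ)^t) := by
    rcases Int.natAbs_eq B.det with he' | he'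
    · left; rw [he', ht]; push_cast; ring
    · right; rw [he', ht]; push_cast; ring
  -- integrality of the two products
  have hKint : ∀ i j, ‖(cRH.mapMatrix K) i j‖ ≤ 1 := by
    intro i j
    rw [RingHom.mapMatrix_apply, Matrix.map_apply]
    show ‖((K i j : ℤ_[p]) : ℚ_[p])‖ ≤ 1
    rw [← PadicInt.norm_def]
    exact PadicInt.norm_le_one _
  have hK'int : ∀ i j, ‖(cRH.mapMatrix K') i j‖ ≤ 1 := by
    intro i j
    rw [RingHom.mapMatrix_apply, Matrix.map_apply]
    show ‖((K' i j : ℤ_[p]) : ℚ_[p])‖ ≤ 1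
    rw [← PadicInt.norm_def]
    exact PadicInt.norm_le_one _
  have hintcast : ∀ (X : Matrix (Fin n) (Fin n) ℤ) i j, ‖(ψ.mapMatrix X) i j‖ ≤ 1 := by
    intro X i j
    rw [RingHom.mapMatrix_apply, Matrix.map_apply]
    exact Padic.norm_int_le_one _
  have hT1 : ∀ i j, ‖(h⁻¹ * Bq) i j‖ ≤ 1 := by
    have hinvAq : h⁻¹ * Aq = cRH.mapMatrix K := by
      rw [hAK, ← Matrix.mul_assoc, Matrix.nonsing_inv_mul _ (isUnit_iff_ne_zero.mpr hhdet),
        Matrix.one_mul]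
    have hexp : h⁻¹ * Bq = (cRH.mapMatrix K) * C2q
        + (h.det⁻¹ * (p:ℚ_[p])^(s+1)) • (h.adjugate * C3q) := by
      rw [hq2, Matrix.mul_add, ← Matrix.mul_assoc, hinvAq]
      congr 1
      rw [Matrix.mul_smul, Matrix.inv_def, Ring.inverse_eq_inv, Matrix.smul_mul, smul_smul,
        mul_comm]
    rw [hexp]
    refine matInt_add (matInt_mul hKint (hintcast C2)) (matInt_smul ?_ (matInt_mul hadj (hintcast C3)))
    rw [norm_mul, norm_pow, Padic.norm_p, mul_comm]
    calc ((p:ℝ)⁻¹)^(s+1) * ‖h.det⁻¹‖ ≤ ((p:ℝ)⁻¹)^(s+1) * (p:ℝ)^s := by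
          exact mul_le_mul_of_nonneg_left hs (by positivity)
      _ = ((p:ℝ))⁻¹ := by
          rw [inv_pow, pow_succ]
          field_simp
      _ ≤ 1 := by
          rw [inv_le_one_iff₀]; right; exact hp1R.le
  have hT2 : ∀ i j, ‖(Bq⁻¹ * h) i j‖ ≤ 1 := by
    have hKmul : (cRH.mapMatrix K) * (cRH.mapMatrix K') = 1 := by
      rw [← _root_.map_mul, hKK', _root_.map_one]
    have hhB : h = Bq * (C1q * cRH.mapMatrix K') := by
      have h1 : h = Aq * cRH.mapMatrix K' := by
        rw [hAK, Matrix.mul_assoc, hKmul, Matrix.mul_one]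
      rw [h1, hq1, Matrix.mul_assoc]
    have : Bq⁻¹ * h = C1q * cRH.mapMatrix K' := by
      rw [hhB, ← Matrix.mul_assoc, Matrix.nonsing_inv_mul _ (isUnit_iff_ne_zero.mpr hBqdet),
        Matrix.one_mul]
    rw [this]
    exact matInt_mul (hintcast C1) hK'int
  -- build γ
  set ρ : ℚ →+* ℚ_[p] := Rat.castHom ℚ_[p] with hρ
  set φ : ℤ →+* ℚ := Int.castRingHom ℚ with hφ
  set Bqq : Matrix (Fin n) (Fin n) ℚ := φ.mapMatrix B with hBqqdef
  have hBqqdet : Bqq.det ≠ 0 := by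
    rw [hBqqdef, ← RingHom.map_det, hφ, Int.coe_castRingHom]
    show ¬((B.det : ℚ) = 0)
    exact_mod_cast hBdet
  have hprQ : ((p:ℚ)^r) ≠ 0 := pow_ne_zero _ (by exact_mod_cast hp.ne_zero)
  set γmat : Matrix (Fin n) (Fin n) ℚ := ((p:ℚ)^r)⁻¹ • Bqq with hγmat
  have hγdet : γmat.det ≠ 0 := by
    rw [hγmat, Matrix.det_smul]
    exact mul_ne_zero (pow_ne_zero _ (inv_ne_zero hprQ)) hBqqdet
  have hpQ : (p:ℚ) ≠ 0 := by exact_mod_cast hp.ne_zero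
  have hBqqentry : ∀ i j, Bqq i j = (B i j : ℚ) := by
    intro i j; simp [hBqqdef, hφ]
  have hBqqinv : Bqq * Bqq⁻¹ = 1 := Matrix.mul_nonsing_inv _ (isUnit_iff_ne_zero.mpr hBqqdet)
  have hγinv : γmat⁻¹ = ((p:ℚ)^r) • Bqq⁻¹ := by
    apply Matrix.inv_eq_right_inv
    rw [hγmat, Matrix.smul_mul, Matrix.mul_smul, smul_smul, inv_mul_cancel₀ hprQ, hBqqinv,
      one_smul]
  have hdetBqq : Bqq.det = (B.det : ℚ) := by
    rw [hBqqdef, ← RingHom.map_det, hφ, Int.coe_castRingHom]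
  have hadjBqq : Bqq.adjugate = φ.mapMatrix (B.adjugate) := by
    rw [hBqqdef]; exact (RingHom.map_adjugate φ B).symm
  have hρmapBqq : ρ.mapMatrix Bqq = Bq := by
    ext i j
    simp only [RingHom.mapMatrix_apply, Matrix.map_apply, hBqdef, hBqqdef, hρ, hφ, hψ,
      Int.coe_castRingHom, Rat.coe_castHom, Int.coe_castRingHom]
    push_cast
    rfl
  have hBqinvmap : Bq⁻¹ = ρ.mapMatrix (Bqq⁻¹) := by
    apply Matrix.inv_eq_right_inv
    rw [← hρmapBqq, ← _root_.map_mul, hBqqinv, _root_.map_one]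
  have hPrne : ((p:ℚ_[p])^r) ≠ 0 := pow_ne_zero _ hPne
  have hGG' : G * G⁻¹ = 1 := Matrix.mul_nonsing_inv _ (isUnit_iff_ne_zero.mpr hGdet)
  have hGinvsmul : h⁻¹ = ((p:ℚ_[p])^r)⁻¹ • G⁻¹ := by
    apply Matrix.inv_eq_right_inv
    rw [hh, Matrix.smul_mul, Matrix.mul_smul, smul_smul, mul_inv_cancel₀ hPrne, hGG', one_smul]
  refine ⟨Matrix.GeneralLinearGroup.mkOfDetNeZero γmat hγdet, ?_, ?_, ?_, ?_⟩
  -- entries of γ lie in ℤ[1/p]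
  · intro i j
    refine ⟨B i j, r, ?_⟩
    show (((p:ℚ)^r)⁻¹ • Bqq) i j = _
    rw [Matrix.smul_apply, smul_eq_mul, hBqqentry, div_eq_mul_inv, mul_comm]
  -- entries of γ⁻¹ lie in ℤ[1/p]
  · intro i j
    rw [coe_units_inv]
    show IsZInvP p ((γmat⁻¹) i j)
    rw [hγinv, Matrix.smul_apply, Matrix.inv_def, Ring.inverse_eq_inv, hdetBqq, hadjBqq,
      Matrix.smul_apply]
    have hadjentry : (φ.mapMatrix B.adjugate) i j = (B.adjugate i j : ℚ) := by
      simp [hφ]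
    rw [hadjentry]
    rcases hsign with hd | hd
    · refine ⟨B.adjugate i j * (p:ℤ)^r, t, ?_⟩
      rw [hd]
      push_cast
      field_simp
      rw [smul_eq_mul, smul_eq_mul]; field_simp
    · refine ⟨-(B.adjugate i j * (p:ℤ)^r), t, ?_⟩
      rw [hd]
      push_cast
      field_simp
      rw [smul_eq_mul, smul_eq_mul]; field_simp
  -- entries of γ⁻¹ g lie in ℤ_p
  · intro i j
    rw [coe_units_inv]
    have hkey : ((γmat⁻¹).map (fun q : ℚ => (q : ℚ_[p]))) * G = Bq⁻¹ * h := by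
      have h1 : (γmat⁻¹).map (fun q : ℚ => (q : ℚ_[p])) = ((p:ℚ_[p])^r) • Bq⁻¹ := by
        rw [hγinv, hBqinvmap]
        ext i' j'
        simp only [Matrix.map_apply, Matrix.smul_apply, smul_eq_mul, RingHom.mapMatrix_apply,
          hρ, Rat.coe_castHom]
        push_cast
        ring
      rw [h1, Matrix.smul_mul, ← Matrix.mul_smul, ← hh]
    show InZp ((((γmat⁻¹).map (fun q : ℚ => (q : ℚ_[p]))) * G) i j)
    rw [hkey, inZp_iff]
    exact hT2 i j
  -- entries of g⁻¹ γ lie in ℤ_p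
  · intro i j
    rw [coe_units_inv]
    have hγmap : γmat.map (fun q : ℚ => (q : ℚ_[p])) = ((p:ℚ_[p])^r)⁻¹ • Bq := by
      rw [hγmat]
      ext i' j'
      simp only [Matrix.map_apply, Matrix.smul_apply, smul_eq_mul, hBqqentry, hBqdef,
        RingHom.mapMatrix_apply, hψ, Int.coe_castRingHom]
      push_cast
      ring
    have hkey : G⁻¹ * (γmat.map (fun q : ℚ => (q : ℚ_[p]))) = h⁻¹ * Bq := by
      rw [hγmap, hGinvsmul, Matrix.mul_smul, Matrix.smul_mul]
    show InZp ((G⁻¹ * (γmat.map (fun q : ℚ => (q : ℚ_[p])))) i j)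
    rw [hkey, inZp_iff]
    exact hT1 i j
end
end

section
/- Let p be a prime, n ≥ 1 an integer, and l ∈ ℕ. For g ∈ GL_n(ℚ_p) the following are equivalent: (i) there exist u, v ∈ GL_n(ℤ_p) and a matrix A ∈ Mat_n(ℤ) with det A = p^l such that g = u · A · v, where A is viewed in Mat_n(ℚ_p); (ii) every entry of g lies in ℤ_p and the p-adic valuation of det g equals l. (This is the description K_p · R̃(p^l) · K_p = M(p^l) of the Hecke double coset of level p^l.) -/
open Matrix

noncomputable section

/-- `g ∈ GL_n(ℚ_p)` lies in `GL_n(ℤ_p)`: all entries of `g` and of `g⁻¹` lie in `ℤ_p`. -/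
def IsGLZp {p : ℕ} [Fact p.Prime] {n : ℕ} (g : GL (Fin n) ℚ_[p]) : Prop :=
  (∀ i j, InZp ((g : Matrix (Fin n) (Fin n) ℚ_[p]) i j)) ∧
  (∀ i j, InZp (((g⁻¹ : GL (Fin n) ℚ_[p]) : Matrix (Fin n) (Fin n) ℚ_[p]) i j))

section Aux
variable {p : ℕ} [Fact p.Prime]

lemma val_p_pow (m : ℕ) : ((p : ℚ_[p]) ^ m).valuation = m := by
  rw [← Nat.cast_pow, Padic.valuation_natCast, padicValNat.prime_pow]

lemma val_unit_zero {z : ℤ_[p]} (hz : IsUnit z) : ((z : ℚ_[p])).valuation = 0 := by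
  have h1 : ‖z‖ = 1 := PadicInt.isUnit_iff.mp hz
  have hz0 : (z : ℚ_[p]) ≠ 0 := by
    intro h
    rw [PadicInt.norm_def, h, norm_zero] at h1; norm_num at h1
  have := Padic.norm_eq_zpow_neg_valuation hz0
  rw [← PadicInt.norm_def, h1] at this
  have hp1 : (1 : ℝ) < (p : ℝ) := by exact_mod_cast (Fact.out : p.Prime).one_lt
  have h2 : (p:ℝ) ^ (-(z : ℚ_[p]).valuation) = (p:ℝ) ^ (0:ℤ) := by
    rw [← this, zpow_zero]
  have h3 := (zpow_right_inj₀ (by positivity) (ne_of_gt hp1)).mp h2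
  linarith

lemma snf_matrix (n : ℕ) (M : Matrix (Fin n) (Fin n) ℤ_[p]) (hM : M.det ≠ 0) :
    ∃ (U V : (Matrix (Fin n) (Fin n) ℤ_[p])ˣ) (k : Fin n → ℕ),
      M = (U : Matrix (Fin n) (Fin n) ℤ_[p]) *
        Matrix.diagonal (fun i => (p : ℤ_[p]) ^ k i) * (V : Matrix (Fin n) (Fin n) ℤ_[p]) := by
  classical
  set cols : Fin n → (Fin n → ℤ_[p]) := fun j => Mᵀ j with hcols
  have li : LinearIndependent ℤ_[p] cols := by
    rw [Fintype.linearIndependent_iff]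
    intro c hc
    have hmv : M.mulVec c = 0 := by
      funext i
      have := congrFun hc i
      simpa [cols, Matrix.mulVec, dotProduct, Finset.sum_apply, mul_comm] using this
    have h2 : M.det • c = 0 := by
      have : (M.adjugate * M).mulVec c = 0 := by
        rw [← Matrix.mulVec_mulVec, hmv, Matrix.mulVec_zero]
      rwa [Matrix.adjugate_mul, Matrix.smul_mulVec, Matrix.one_mulVec] at this
    intro i
    have := congrFun h2 i
    simp only [Pi.smul_apply, smul_eq_mul, Pi.zero_apply] at this
    rcases mul_eq_zero.mp this with h | h
    · exact absurd h hM
    · exact h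
  set N : Submodule ℤ_[p] (Fin n → ℤ_[p]) := Submodule.span ℤ_[p] (Set.range cols) with hN
  set colB : Module.Basis (Fin n) ℤ_[p] N := Module.Basis.span li with hcolB
  obtain ⟨m, ⟨bM, bN, f, a, ha⟩⟩ := Submodule.smithNormalForm (Pi.basisFun ℤ_[p] (Fin n)) N
  have hmn : m = n := by
    have e := bN.indexEquiv colB
    simpa using Fintype.card_congr e
  subst hmn
  have hfbij : Function.Bijective f := (Finite.injective_iff_bijective).mp f.injective
  set σ : Fin m ≃ Fin m := Equiv.ofBijective f hfbij with hσ
  set b' : Module.Basis (Fin m) ℤ_[p] (Fin m → ℤ_[p]) := bM.reindex σ.symm with hb'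
  have hb'app : ∀ i, b' i = bM (f i) := by
    intro i
    rw [hb', Module.Basis.reindex_apply, Equiv.symm_symm]
    rfl
  set U : Matrix (Fin m) (Fin m) ℤ_[p] := (Pi.basisFun ℤ_[p] (Fin m)).toMatrix b' with hU
  have Uinv : Invertible U := (Pi.basisFun ℤ_[p] (Fin m)).invertibleToMatrix b'
  set W : Matrix (Fin m) (Fin m) ℤ_[p] := bN.toMatrix colB with hW
  have Winv : Invertible W := bN.invertibleToMatrix colB
  have key : M = U * Matrix.diagonal a * W := by
    ext i j
    have hcol : ((colB j : N) : Fin m → ℤ_[p]) = ∑ t, W t j • ((bN t : N) : Fin m → ℤ_[p]) := by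
      conv_lhs => rw [← bN.sum_toMatrix_smul_self colB j]
      simp only [AddSubmonoidClass.coe_finset_sum, SetLike.val_smul, hW]
    have hMij : M i j = ∑ t, W t j * (a t * bM (f t) i) := by
      have h1 : M i j = cols j i := rfl
      rw [h1, show cols j = ((colB j : N) : Fin m → ℤ_[p]) by rw [hcolB, Module.Basis.span_apply], hcol]
      simp only [Finset.sum_apply, Pi.smul_apply, smul_eq_mul]
      refine Finset.sum_congr rfl fun t _ => ?_
      rw [ha t]
      simp
    rw [hMij, Matrix.mul_apply]
    refine Finset.sum_congr rfl fun t _ => ?_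
    rw [Matrix.mul_diagonal]
    have hUe : U i t = bM (f t) i := by
      rw [hU, Module.Basis.toMatrix_apply, hb'app, Pi.basisFun_repr]
    rw [hUe]; ring
  have hane : ∀ i, a i ≠ 0 := by
    intro i hai
    have : (bN i : Fin m → ℤ_[p]) = 0 := by rw [ha i, hai, zero_smul]
    exact bN.ne_zero i (Subtype.coe_injective this)
  set k : Fin m → ℕ := fun i => ((a i).valuation) with hk
  set du : Fin m → ℤ_[p] := fun i => (PadicInt.unitCoeff (hane i) : ℤ_[p]) with hdu
  have haeq : ∀ i, a i = (p : ℤ_[p]) ^ k i * du i := by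
    intro i
    rw [hdu, hk, mul_comm]
    exact PadicInt.unitCoeff_spec (hane i)
  have hdiag : Matrix.diagonal a =
      Matrix.diagonal (fun i => (p : ℤ_[p]) ^ k i) * Matrix.diagonal du := by
    rw [Matrix.diagonal_mul_diagonal]
    exact congrArg Matrix.diagonal (funext haeq)
  have duInv : Invertible (Matrix.diagonal du) := by
    refine ⟨Matrix.diagonal (fun i => ((PadicInt.unitCoeff (hane i))⁻¹ : ℤ_[p]ˣ)), ?_, ?_⟩ <;>
    · rw [Matrix.diagonal_mul_diagonal]
      convert Matrix.diagonal_one with i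
      simp [hdu]
  refine ⟨@unitOfInvertible _ _ U Uinv,
    (@unitOfInvertible _ _ _ duInv) * (@unitOfInvertible _ _ W Winv), k, ?_⟩
  rw [key, hdiag]
  simp only [Units.val_mul, val_unitOfInvertible]
  noncomm_ring

end Aux

section Main

variable {p : ℕ} [Fact p.Prime]

/-- the coercion ring hom on matrices -/
private def Φ {n : ℕ} : Matrix (Fin n) (Fin n) ℤ_[p] →+* Matrix (Fin n) (Fin n) ℚ_[p] :=
  (PadicInt.Coe.ringHom).mapMatrix

lemma coe_unit_ne_zero {z : ℤ_[p]} (hz : IsUnit z) : (z : ℚ_[p]) ≠ 0 :=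
  (PadicInt.coe_ne_zero (x := z)).mpr hz.ne_zero

lemma map_coe_mul {n : ℕ} (A B : Matrix (Fin n) (Fin n) ℤ_[p]) :
    (A * B).map (fun z : ℤ_[p] => (z : ℚ_[p])) =
      A.map (fun z : ℤ_[p] => (z : ℚ_[p])) * B.map (fun z : ℤ_[p] => (z : ℚ_[p])) :=
  Matrix.map_mul (f := PadicInt.Coe.ringHom)

lemma det_map_coe {n : ℕ} (A : Matrix (Fin n) (Fin n) ℤ_[p]) :
    (A.map (fun z : ℤ_[p] => (z : ℚ_[p]))).det = ((A.det : ℤ_[p]) : ℚ_[p]) :=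
  (RingHom.map_det (PadicInt.Coe.ringHom) A).symm

lemma det_map_int {n : ℕ} (A : Matrix (Fin n) (Fin n) ℤ) :
    (A.map (fun z : ℤ => (z : ℚ_[p]))).det = ((A.det : ℤ) : ℚ_[p]) :=
  (RingHom.map_det (Int.castRingHom ℚ_[p]) A).symm

lemma glzp_of_matrix_unit {n : ℕ} (U : (Matrix (Fin n) (Fin n) ℤ_[p])ˣ) :
    IsGLZp (Units.map (Φ (p := p) (n := n)).toMonoidHom U) := by
  constructor
  · intro i j
    exact ⟨(U : Matrix (Fin n) (Fin n) ℤ_[p]) i j, rfl⟩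
  · intro i j
    refine ⟨((U⁻¹ : _ˣ) : Matrix (Fin n) (Fin n) ℤ_[p]) i j, ?_⟩
    have : (Units.map (Φ (p := p) (n := n)).toMonoidHom U)⁻¹ =
        Units.map (Φ (p := p) (n := n)).toMonoidHom U⁻¹ := (map_inv _ _).symm
    rw [this]
    rfl

/-- The description `K_p · R̃(p^l) · K_p = M(p^l)` of the Hecke double coset of level
`p^l`: `g ∈ GL_n(ℚ_p)` can be written `g = u · A · v` with `u, v ∈ GL_n(ℤ_p)` and
`A` an integer matrix with `det A = p ^ l` if and only if all entries of `g` lie in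
`ℤ_p` and the `p`-adic valuation of `det g` equals `l`. -/
theorem stmt5 (p : ℕ) [Fact p.Prime] (n : ℕ) (hn : 1 ≤ n) (l : ℕ) (g : GL (Fin n) ℚ_[p]) :
    (∃ (u v : GL (Fin n) ℚ_[p]) (A : Matrix (Fin n) (Fin n) ℤ),
        IsGLZp u ∧ IsGLZp v ∧ A.det = (p : ℤ) ^ l ∧
        (g : Matrix (Fin n) (Fin n) ℚ_[p]) =
          (u : Matrix (Fin n) (Fin n) ℚ_[p]) * A.map (fun z => (z : ℚ_[p])) *
            (v : Matrix (Fin n) (Fin n) ℚ_[p]))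
    ↔ ((∀ i j, InZp ((g : Matrix (Fin n) (Fin n) ℚ_[p]) i j)) ∧
        ((g : Matrix (Fin n) (Fin n) ℚ_[p]).det).valuation = (l : ℤ)) := by
  constructor
  · rintro ⟨u, v, A, ⟨hu1, hu2⟩, ⟨hv1, hv2⟩, hAdet, heq⟩
    choose Uf hUf using hu1
    choose Vf hVf using hv1
    choose Uif hUif using hu2
    choose Vif hVif using hv2
    set U : Matrix (Fin n) (Fin n) ℤ_[p] := Matrix.of Uf with hU
    set V : Matrix (Fin n) (Fin n) ℤ_[p] := Matrix.of Vf with hV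
    have hUmap : U.map (fun z => (z : ℚ_[p])) = (u : Matrix (Fin n) (Fin n) ℚ_[p]) := by
      ext i j; exact hUf i j
    have hVmap : V.map (fun z => (z : ℚ_[p])) = (v : Matrix (Fin n) (Fin n) ℚ_[p]) := by
      ext i j; exact hVf i j
    -- the integer matrix over ℤ_[p]
    have hAmap : (A.map (fun z => ((z : ℤ_[p])))).map (fun z => (z : ℚ_[p]))
        = A.map (fun z => ((z : ℚ_[p]))) := by
      ext i j; simp [Matrix.map_apply]
    have hprod : (g : Matrix (Fin n) (Fin n) ℚ_[p]) =
        (U * A.map (fun z => ((z : ℤ_[p]))) * V).map (fun z => (z : ℚ_[p])) := by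
      rw [heq, ← hUmap, ← hVmap, ← hAmap, map_coe_mul, map_coe_mul]
    constructor
    · intro i j
      rw [hprod]
      exact ⟨(U * A.map (fun z => ((z : ℤ_[p]))) * V) i j, rfl⟩
    · -- valuation computation
      have hdetu : ∃ z : ℤ_[p], IsUnit z ∧ ((z : ℚ_[p])) = (u : Matrix (Fin n) (Fin n) ℚ_[p]).det := by
        set U' : Matrix (Fin n) (Fin n) ℤ_[p] := Matrix.of Uif with hU'
        have hU'map : U'.map (fun z => (z : ℚ_[p])) =
            ((u⁻¹ : GL (Fin n) ℚ_[p]) : Matrix (Fin n) (Fin n) ℚ_[p]) := by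
          ext i j; exact hUif i j
        have h1 : (u : Matrix (Fin n) (Fin n) ℚ_[p]) *
            ((u⁻¹ : GL (Fin n) ℚ_[p]) : Matrix (Fin n) (Fin n) ℚ_[p]) = 1 := by
          rw [← Units.val_mul, mul_inv_cancel, Units.val_one]
        have h2 : ((U.det * U'.det : ℤ_[p]) : ℚ_[p]) = 1 := by
          push_cast
          have e1 : ((U.det : ℤ_[p]) : ℚ_[p]) = (u : Matrix (Fin n) (Fin n) ℚ_[p]).det := by
            rw [← hUmap]
            exact (det_map_coe U).symm
          have e2 : ((U'.det : ℤ_[p]) : ℚ_[p]) =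
              ((u⁻¹ : GL (Fin n) ℚ_[p]) : Matrix (Fin n) (Fin n) ℚ_[p]).det := by
            rw [← hU'map]
            exact (det_map_coe U').symm
          rw [e1, e2, ← Matrix.det_mul, h1, Matrix.det_one]
        have h3 : U.det * U'.det = 1 := by
          refine Subtype.coe_injective ?_
          simpa using h2
        refine ⟨U.det, ⟨⟨_, _, h3, by rw [mul_comm]; exact h3⟩, rfl⟩, ?_⟩
        rw [← hUmap]; exact (det_map_coe U).symm
      have hdetv : ∃ z : ℤ_[p], IsUnit z ∧ ((z : ℚ_[p])) = (v : Matrix (Fin n) (Fin n) ℚ_[p]).det := by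
        set V' : Matrix (Fin n) (Fin n) ℤ_[p] := Matrix.of Vif with hV'
        have hV'map : V'.map (fun z => (z : ℚ_[p])) =
            ((v⁻¹ : GL (Fin n) ℚ_[p]) : Matrix (Fin n) (Fin n) ℚ_[p]) := by
          ext i j; exact hVif i j
        have h1 : (v : Matrix (Fin n) (Fin n) ℚ_[p]) *
            ((v⁻¹ : GL (Fin n) ℚ_[p]) : Matrix (Fin n) (Fin n) ℚ_[p]) = 1 := by
          rw [← Units.val_mul, mul_inv_cancel, Units.val_one]
        have h2 : ((V.det * V'.det : ℤ_[p]) : ℚ_[p]) = 1 := by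
          push_cast
          have e1 : ((V.det : ℤ_[p]) : ℚ_[p]) = (v : Matrix (Fin n) (Fin n) ℚ_[p]).det := by
            rw [← hVmap]
            exact (det_map_coe V).symm
          have e2 : ((V'.det : ℤ_[p]) : ℚ_[p]) =
              ((v⁻¹ : GL (Fin n) ℚ_[p]) : Matrix (Fin n) (Fin n) ℚ_[p]).det := by
            rw [← hV'map]
            exact (det_map_coe V').symm
          rw [e1, e2, ← Matrix.det_mul, h1, Matrix.det_one]
        have h3 : V.det * V'.det = 1 := by
          refine Subtype.coe_injective ?_
          simpa using h2
        refine ⟨V.det, ⟨⟨_, _, h3, by rw [mul_comm]; exact h3⟩, rfl⟩, ?_⟩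
        rw [← hVmap]; exact (det_map_coe V).symm
      obtain ⟨zu, hzu, hzue⟩ := hdetu
      obtain ⟨zv, hzv, hzve⟩ := hdetv
      have hAdet' : (A.map (fun z => ((z : ℚ_[p])))).det = (p : ℚ_[p]) ^ l := by
        rw [det_map_int, hAdet]
        push_cast
        ring
      have hdet : (g : Matrix (Fin n) (Fin n) ℚ_[p]).det =
          ((zu : ℚ_[p])) * ((p : ℚ_[p]) ^ l) * ((zv : ℚ_[p])) := by
        rw [heq, Matrix.det_mul, Matrix.det_mul, hAdet', hzue, hzve]
      rw [hdet]
      have h1 : ((zu : ℚ_[p])) ≠ 0 := coe_unit_ne_zero hzu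
      have h2 : ((p : ℚ_[p]) ^ l) ≠ 0 := by
        apply pow_ne_zero
        exact_mod_cast (Nat.cast_ne_zero (R := ℚ_[p])).mpr (Fact.out : p.Prime).ne_zero
      have h3 : ((zv : ℚ_[p])) ≠ 0 := coe_unit_ne_zero hzv
      rw [Padic.valuation_mul (mul_ne_zero h1 h2) h3,
        Padic.valuation_mul h1 h2, val_unit_zero hzu, val_unit_zero hzv, val_p_pow]
      ring
  · rintro ⟨hent, hval⟩
    choose Mf hMf using hent
    set M : Matrix (Fin n) (Fin n) ℤ_[p] := Matrix.of Mf with hM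
    have hmap : M.map (fun z => (z : ℚ_[p])) = (g : Matrix (Fin n) (Fin n) ℚ_[p]) := by
      ext i j; exact hMf i j
    have hdg : (g : Matrix (Fin n) (Fin n) ℚ_[p]).det ≠ 0 := by
      have h1 : (g : Matrix (Fin n) (Fin n) ℚ_[p]) *
          ((g⁻¹ : GL (Fin n) ℚ_[p]) : Matrix (Fin n) (Fin n) ℚ_[p]) = 1 := by
        rw [← Units.val_mul, mul_inv_cancel, Units.val_one]
      have h2 := congrArg Matrix.det h1
      rw [Matrix.det_mul, Matrix.det_one] at h2
      exact left_ne_zero_of_mul_eq_one h2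
    have hMdet : M.det ≠ 0 := by
      intro h
      apply hdg
      rw [← hmap]
      rw [det_map_coe, h]
      simp
    obtain ⟨U, V, k, hUVk⟩ := snf_matrix n M hMdet
    -- compute the total valuation
    have hUdet : IsUnit ((U : Matrix (Fin n) (Fin n) ℤ_[p])).det :=
      (Matrix.isUnit_iff_isUnit_det _).mp U.isUnit
    have hVdet : IsUnit ((V : Matrix (Fin n) (Fin n) ℤ_[p])).det :=
      (Matrix.isUnit_iff_isUnit_det _).mp V.isUnit
    have hgdet : (g : Matrix (Fin n) (Fin n) ℚ_[p]).det =
        (((U : Matrix (Fin n) (Fin n) ℤ_[p]).det : ℚ_[p])) * (p : ℚ_[p]) ^ (∑ i, k i) *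
          (((V : Matrix (Fin n) (Fin n) ℤ_[p]).det : ℚ_[p])) := by
      rw [← hmap, hUVk]
      have hd : ((U : Matrix (Fin n) (Fin n) ℤ_[p]) *
          Matrix.diagonal (fun i => (p : ℤ_[p]) ^ k i) * (V : Matrix (Fin n) (Fin n) ℤ_[p])).det
          = (U : Matrix (Fin n) (Fin n) ℤ_[p]).det * (∏ i, (p : ℤ_[p]) ^ k i) *
            (V : Matrix (Fin n) (Fin n) ℤ_[p]).det := by
        rw [Matrix.det_mul, Matrix.det_mul, Matrix.det_diagonal]
      rw [det_map_coe, hd, Finset.prod_pow_eq_pow_sum]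
      push_cast
      ring
    have hsum : ∑ i, k i = l := by
      have h1 : (((U : Matrix (Fin n) (Fin n) ℤ_[p]).det : ℚ_[p])) ≠ 0 := coe_unit_ne_zero hUdet
      have h3 : (((V : Matrix (Fin n) (Fin n) ℤ_[p]).det : ℚ_[p])) ≠ 0 := coe_unit_ne_zero hVdet
      have h2 : ((p : ℚ_[p]) ^ (∑ i, k i)) ≠ 0 := by
        apply pow_ne_zero
        exact_mod_cast (Nat.cast_ne_zero (R := ℚ_[p])).mpr (Fact.out : p.Prime).ne_zero
      rw [hgdet, Padic.valuation_mul (mul_ne_zero h1 h2) h3,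
        Padic.valuation_mul h1 h2, val_unit_zero hUdet, val_unit_zero hVdet, val_p_pow] at hval
      have h4 : ((∑ i, k i : ℕ) : ℤ) = (l : ℤ) := by linarith [hval]
      exact_mod_cast h4
    refine ⟨Units.map (Φ (p := p) (n := n)).toMonoidHom U,
      Units.map (Φ (p := p) (n := n)).toMonoidHom V,
      Matrix.diagonal (fun i => (p : ℤ) ^ k i),
      glzp_of_matrix_unit U, glzp_of_matrix_unit V, ?_, ?_⟩
    · rw [Matrix.det_diagonal, Finset.prod_pow_eq_pow_sum, hsum]
    · rw [← hmap, hUVk, map_coe_mul, map_coe_mul]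
      congr 1
      · congr 1
        rw [Matrix.diagonal_map (by simp), Matrix.diagonal_map (by simp)]
        congr 1
        funext i
        push_cast
        ring

end Main
end
end

section
/- Let p be a prime, n ≥ 1 an integer, and l ∈ ℕ. Let R(p^l) = {A ∈ Mat_n(ℤ) : det A = p^l}. The assignment A ↦ A · GL_n(ℤ_p) (viewing A as an element of GL_n(ℚ_p)) induces a well-defined bijection from the set of orbits of SL_n(ℤ) acting on R(p^l) by right multiplication onto the set of left cosets g · GL_n(ℤ_p) in GL_n(ℚ_p) for which every entry of g lies in ℤ_p and the p-adic valuation of det g equals l. -/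
open Matrix

noncomputable section

/-- `GL_n(ℤ_p)` as a subgroup of `GL_n(ℚ_p)`: the range of the map induced by the
inclusion `ℤ_[p] →+* ℚ_[p]`. -/
def glZpSubgroup (p n : ℕ) [Fact p.Prime] : Subgroup (GL (Fin n) ℚ_[p]) :=
  (Units.map (RingHom.toMonoidHom
    (RingHom.mapMatrix (PadicInt.Coe.ringHom (p := p))
      : Matrix (Fin n) (Fin n) ℤ_[p] →+* Matrix (Fin n) (Fin n) ℚ_[p]))).range

/-- `R(p^l)`: the set of `n × n` integer matrices of determinant `p ^ l`. -/
def Rset (p n l : ℕ) : Set (Matrix (Fin n) (Fin n) ℤ) := {A | A.det = (p : ℤ) ^ l}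

/-- The relation of lying in the same orbit of the right-multiplication action of
`SL_n(ℤ)` on `R(p^l)`. -/
def orbRel (p n l : ℕ) (A B : Rset p n l) : Prop :=
  ∃ s : Matrix.SpecialLinearGroup (Fin n) ℤ,
    (B : Matrix (Fin n) (Fin n) ℤ) =
      (A : Matrix (Fin n) (Fin n) ℤ) * (s : Matrix (Fin n) (Fin n) ℤ)

namespace Stmt6Aux

variable {p : ℕ} [Fact p.Prime] {n l : ℕ}

/-- The ring hom `Mat(ℤ_p) → Mat(ℚ_p)`. -/
def homZQ (p n : ℕ) [Fact p.Prime] :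
    Matrix (Fin n) (Fin n) ℤ_[p] →+* Matrix (Fin n) (Fin n) ℚ_[p] :=
  RingHom.mapMatrix (PadicInt.Coe.ringHom (p := p))

lemma glZp_eq (p n : ℕ) [Fact p.Prime] :
    glZpSubgroup p n = (Units.map (homZQ p n).toMonoidHom).range := rfl

/-- Cast an integer matrix to `ℚ_p`. -/
def mq (p : ℕ) [Fact p.Prime] {n : ℕ} (A : Matrix (Fin n) (Fin n) ℤ) :
    Matrix (Fin n) (Fin n) ℚ_[p] :=
  RingHom.mapMatrix (Int.castRingHom ℚ_[p]) A

/-- Cast an integer matrix to `ℤ_p`. -/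
def mz (p : ℕ) [Fact p.Prime] {n : ℕ} (A : Matrix (Fin n) (Fin n) ℤ) :
    Matrix (Fin n) (Fin n) ℤ_[p] :=
  RingHom.mapMatrix (Int.castRingHom ℤ_[p]) A

lemma mq_apply (A : Matrix (Fin n) (Fin n) ℤ) (i j : Fin n) :
    mq p A i j = (A i j : ℚ_[p]) := rfl

lemma mz_apply (A : Matrix (Fin n) (Fin n) ℤ) (i j : Fin n) :
    mz p A i j = (A i j : ℤ_[p]) := rfl

lemma mq_eq_homZQ_mz (A : Matrix (Fin n) (Fin n) ℤ) :
    mq p A = homZQ p n (mz p A) := by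
  ext i j
  simp [mq, mz, homZQ, RingHom.mapMatrix_apply, Matrix.map_apply]

lemma det_mq (A : Matrix (Fin n) (Fin n) ℤ) : (mq p A).det = (A.det : ℚ_[p]) :=
  ((Int.castRingHom ℚ_[p]).map_det A).symm

lemma det_mz (A : Matrix (Fin n) (Fin n) ℤ) : (mz p A).det = (A.det : ℤ_[p]) :=
  ((Int.castRingHom ℤ_[p]).map_det A).symm

lemma mq_eq_map (A : Matrix (Fin n) (Fin n) ℤ) :
    A.map (fun z : ℤ => ((z : ℤ_[p]) : ℚ_[p])) = mq p A := by
  ext i j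
  simp [mq, RingHom.mapMatrix_apply, Matrix.map_apply]

lemma mq_mul (X Y : Matrix (Fin n) (Fin n) ℤ) :
    mq p (X * Y) = mq p X * mq p Y := _root_.map_mul _ X Y

lemma mq_one : mq p (1 : Matrix (Fin n) (Fin n) ℤ) = 1 := _root_.map_one _

lemma mq_adjugate (X : Matrix (Fin n) (Fin n) ℤ) :
    mq p X.adjugate = (mq p X).adjugate := RingHom.map_adjugate _ X

lemma isUnit_det_mq (A : Rset p n l) : IsUnit ((mq p (A : Matrix (Fin n) (Fin n) ℤ)).det) := by
  rw [det_mq, A.2]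
  push_cast
  refine isUnit_iff_ne_zero.2 (pow_ne_zero _ ?_)
  exact_mod_cast (Nat.cast_ne_zero (R := ℚ_[p])).2 (Fact.out (p := p.Prime)).ne_zero

/-- The canonical unit in `GL_n(ℚ_p)` attached to `A ∈ R(p^l)`. -/
def phi (A : Rset p n l) : GL (Fin n) ℚ_[p] :=
  Matrix.nonsingInvUnit _ (isUnit_det_mq A)

lemma coe_phi (A : Rset p n l) :
    (phi A : Matrix (Fin n) (Fin n) ℚ_[p]) = mq p (A : Matrix (Fin n) (Fin n) ℤ) := rfl

lemma valuation_det_phi (A : Rset p n l) :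
    ((phi A : Matrix (Fin n) (Fin n) ℚ_[p]).det).valuation = (l : ℤ) := by
  rw [coe_phi, det_mq, A.2, Padic.valuation_intCast]
  rw [padicValInt]
  simp [Int.natAbs_pow, padicValNat.prime_pow]

lemma mk_eq_of_unit_mul {g h : GL (Fin n) ℚ_[p]} (U : (Matrix (Fin n) (Fin n) ℤ_[p])ˣ)
    (hU : g * Units.map (homZQ p n).toMonoidHom U = h) :
    (QuotientGroup.mk h : GL (Fin n) ℚ_[p] ⧸ glZpSubgroup p n) = QuotientGroup.mk g := by
  subst hU
  exact QuotientGroup.mk_mul_of_mem g ⟨U, rfl⟩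

end Stmt6Aux

namespace Stmt6Aux

variable {p : ℕ} [Fact p.Prime] {n l : ℕ}

/-- The target subtype. -/
def Tgt (p n l : ℕ) [Fact p.Prime] :=
  {c : GL (Fin n) ℚ_[p] ⧸ glZpSubgroup p n |
    ∃ g : GL (Fin n) ℚ_[p],
      (QuotientGroup.mk g : GL (Fin n) ℚ_[p] ⧸ glZpSubgroup p n) = c ∧
      (∀ i j, InZp ((g : Matrix (Fin n) (Fin n) ℚ_[p]) i j)) ∧
      ((g : Matrix (Fin n) (Fin n) ℚ_[p]).det).valuation = (l : ℤ)}

lemma mem_tgt (A : Rset p n l) :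
    (QuotientGroup.mk (phi A) : GL (Fin n) ℚ_[p] ⧸ glZpSubgroup p n) ∈ Tgt p n l := by
  refine ⟨phi A, rfl, fun i j => ?_, valuation_det_phi A⟩
  exact ⟨((A : Matrix (Fin n) (Fin n) ℤ) i j : ℤ_[p]), by
    rw [coe_phi, mq_apply]; simp⟩

/-- The forward map on representatives. -/
def Phi0 (A : Rset p n l) : Tgt p n l :=
  ⟨QuotientGroup.mk (phi A), mem_tgt A⟩

lemma Phi0_respects (A B : Rset p n l) (h : orbRel p n l A B) : Phi0 A = Phi0 B := by
  obtain ⟨s, hs⟩ := h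
  have h1 : mz p (s : Matrix (Fin n) (Fin n) ℤ) * mz p ((s⁻¹ : Matrix.SpecialLinearGroup (Fin n) ℤ) : Matrix (Fin n) (Fin n) ℤ) = 1 := by
    simp only [mz, ← RingHom.map_mul, ← Matrix.SpecialLinearGroup.coe_mul,
      mul_inv_cancel]
    simp
  have h2 : mz p ((s⁻¹ : Matrix.SpecialLinearGroup (Fin n) ℤ) : Matrix (Fin n) (Fin n) ℤ) * mz p (s : Matrix (Fin n) (Fin n) ℤ) = 1 := by
    simp only [mz, ← RingHom.map_mul, ← Matrix.SpecialLinearGroup.coe_mul,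
      inv_mul_cancel]
    simp
  set U : (Matrix (Fin n) (Fin n) ℤ_[p])ˣ := ⟨_, _, h1, h2⟩ with hUdef
  have hU : phi A * Units.map (homZQ p n).toMonoidHom U = phi B := by
    refine Units.ext ?_
    show (phi A : Matrix (Fin n) (Fin n) ℚ_[p]) * homZQ p n (U : Matrix (Fin n) (Fin n) ℤ_[p]) = (phi B : Matrix (Fin n) (Fin n) ℚ_[p])
    rw [coe_phi, coe_phi, hs]
    show mq p _ * homZQ p n (mz p _) = _
    rw [← mq_eq_homZQ_mz, mq, mq, mq, ← RingHom.map_mul]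
  exact Subtype.ext (mk_eq_of_unit_mul U hU).symm

/-- The forward map. -/
def Phi : Quot (orbRel p n l) → Tgt p n l :=
  Quot.lift Phi0 Phi0_respects

end Stmt6Aux

namespace Stmt6Aux

variable {p : ℕ} [Fact p.Prime] {n l : ℕ}

lemma plpow_ne_zero : ((p : ℤ) ^ l : ℤ) ≠ 0 :=
  pow_ne_zero _ (by exact_mod_cast (Fact.out (p := p.Prime)).ne_zero)

lemma plpow_q_ne_zero : (((p : ℤ) ^ l : ℤ) : ℚ_[p]) ≠ 0 := by
  exact_mod_cast plpow_ne_zero (p := p) (l := l)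

lemma mq_injective : Function.Injective (mq p (n := n)) := by
  intro A B h
  ext i j
  have := congrFun (congrFun h i) j
  rw [mq_apply, mq_apply] at this
  exact_mod_cast this

/-- From a `ℤ_p`-unit relating `mq A` and `mq B`, extract an integral matrix. -/
lemma exists_int_of_unit (A B : Rset p n l) (V : Matrix (Fin n) (Fin n) ℤ_[p])
    (hV : mq p (A : Matrix (Fin n) (Fin n) ℤ) * homZQ p n V = mq p (B : Matrix (Fin n) (Fin n) ℤ)) :
    ∃ S : Matrix (Fin n) (Fin n) ℤ, mq p S = homZQ p n V := by
  set C : Matrix (Fin n) (Fin n) ℤ := (A : Matrix (Fin n) (Fin n) ℤ).adjugate * B with hC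
  have key : ∀ i j, (((p : ℤ) ^ l : ℤ) : ℚ_[p]) * homZQ p n V i j = (C i j : ℚ_[p]) := by
    have h1 : (((p : ℤ) ^ l : ℤ) : ℚ_[p]) • homZQ p n V = mq p C := by
      calc (((p : ℤ) ^ l : ℤ) : ℚ_[p]) • homZQ p n V
          = ((((p : ℤ) ^ l : ℤ) : ℚ_[p]) • (1 : Matrix (Fin n) (Fin n) ℚ_[p])) * homZQ p n V := by
            rw [Matrix.smul_mul, Matrix.one_mul]
        _ = ((mq p (A : Matrix (Fin n) (Fin n) ℤ)).det •
              (1 : Matrix (Fin n) (Fin n) ℚ_[p])) * homZQ p n V := by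
            rw [det_mq, A.2]
        _ = (mq p (A : Matrix (Fin n) (Fin n) ℤ)).adjugate *
              (mq p (A : Matrix (Fin n) (Fin n) ℤ) * homZQ p n V) := by
            rw [← Matrix.mul_assoc, Matrix.adjugate_mul]
        _ = (mq p (A : Matrix (Fin n) (Fin n) ℤ)).adjugate *
              mq p (B : Matrix (Fin n) (Fin n) ℤ) := by rw [hV]
        _ = mq p C := by
            rw [hC, mq_mul, mq_adjugate]
    intro i j
    have := congrFun (congrFun h1 i) j
    rw [Matrix.smul_apply, smul_eq_mul, mq_apply] at this
    exact this
  have hdvd : ∀ i j, ((p : ℤ) ^ l : ℤ) ∣ C i j := by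
    intro i j
    have hnorm : ‖(C i j : ℚ_[p])‖ ≤ (p : ℝ) ^ (-(l : ℤ)) := by
      rw [← key i j, norm_mul]
      have h4 : ‖(((p : ℤ) ^ l : ℤ) : ℚ_[p])‖ = (p : ℝ) ^ (-(l : ℤ)) := by
        push_cast
        exact Padic.norm_p_pow l
      have h5 : ‖homZQ p n V i j‖ ≤ 1 := by
        have h6 : homZQ p n V i j = ((V i j : ℤ_[p]) : ℚ_[p]) := rfl
        rw [h6, ← PadicInt.norm_def]
        exact PadicInt.norm_le_one _
      calc ‖(((p : ℤ) ^ l : ℤ) : ℚ_[p])‖ * ‖homZQ p n V i j‖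
          ≤ ‖(((p : ℤ) ^ l : ℤ) : ℚ_[p])‖ * 1 :=
            mul_le_mul_of_nonneg_left h5 (norm_nonneg _)
        _ = (p : ℝ) ^ (-(l : ℤ)) := by rw [mul_one, h4]
    have := (Padic.norm_int_le_pow_iff_dvd (C i j) l).1 (by exact_mod_cast hnorm)
    exact_mod_cast this
  refine ⟨Matrix.of (fun i j => (hdvd i j).choose), ?_⟩
  ext i j
  have hij := (hdvd i j).choose_spec
  rw [mq_apply]
  apply mul_left_cancel₀ (plpow_q_ne_zero (p := p) (l := l))
  rw [key i j, hij, Matrix.of_apply]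
  push_cast
  ring

/-- Injectivity core. -/
lemma inj_core (A B : Rset p n l) (h : Phi0 A = Phi0 B) :
    Quot.mk (orbRel p n l) A = Quot.mk (orbRel p n l) B := by
  have hmk : (QuotientGroup.mk (phi A) : GL (Fin n) ℚ_[p] ⧸ glZpSubgroup p n) =
      QuotientGroup.mk (phi B) := congrArg Subtype.val h
  rw [QuotientGroup.eq] at hmk
  rw [glZp_eq] at hmk
  obtain ⟨V, hVeq⟩ := hmk
  -- hVeq : Units.map (homZQ p n).toMonoidHom V = (phi A)⁻¹ * phi B
  have h1 : phi A * Units.map (homZQ p n).toMonoidHom V = phi B := by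
    rw [hVeq, ← mul_assoc, mul_inv_cancel, one_mul]
  have h2 : phi B * Units.map (homZQ p n).toMonoidHom V⁻¹ = phi A := by
    rw [map_inv, ← h1, mul_assoc, mul_inv_cancel, mul_one]
  have hm1 : mq p (A : Matrix (Fin n) (Fin n) ℤ) * homZQ p n (V : Matrix (Fin n) (Fin n) ℤ_[p]) =
      mq p (B : Matrix (Fin n) (Fin n) ℤ) := by
    have := congrArg Units.val h1
    rwa [Units.val_mul, coe_phi, coe_phi] at this
  have hm2 : mq p (B : Matrix (Fin n) (Fin n) ℤ) * homZQ p n ((V⁻¹ : (Matrix (Fin n) (Fin n) ℤ_[p])ˣ) : Matrix (Fin n) (Fin n) ℤ_[p]) =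
      mq p (A : Matrix (Fin n) (Fin n) ℤ) := by
    have := congrArg Units.val h2
    rwa [Units.val_mul, coe_phi, coe_phi] at this
  obtain ⟨S, hS⟩ := exists_int_of_unit A B _ hm1
  obtain ⟨T, hT⟩ := exists_int_of_unit B A _ hm2
  have hAB : (A : Matrix (Fin n) (Fin n) ℤ) * S = B := by
    apply mq_injective (p := p)
    rw [mq_mul, hS, hm1]
  have hST : S * T = 1 := by
    apply mq_injective (p := p)
    rw [mq_mul, mq_one, hS, hT]
    have : homZQ p n ((V : Matrix (Fin n) (Fin n) ℤ_[p]) * ((V⁻¹ : (Matrix (Fin n) (Fin n) ℤ_[p])ˣ) : Matrix (Fin n) (Fin n) ℤ_[p])) = 1 := by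
      rw [← Units.val_mul, mul_inv_cancel]
      simp
    rw [← this, _root_.map_mul]
  have hdetS : S.det = 1 := by
    have hdB : (B : Matrix (Fin n) (Fin n) ℤ).det = (A : Matrix (Fin n) (Fin n) ℤ).det * S.det := by
      rw [← hAB, Matrix.det_mul]
    rw [A.2, B.2] at hdB
    exact mul_left_cancel₀ (plpow_ne_zero (p := p) (l := l)) (by rw [mul_one]; exact hdB.symm)
  exact Quot.sound ⟨⟨S, hdetS⟩, hAB.symm⟩

lemma Phi_injective : Function.Injective (Phi : Quot (orbRel p n l) → Tgt p n l) := by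
  intro x y
  induction x using Quot.ind with
  | _ A =>
    induction y using Quot.ind with
    | _ B => exact inj_core A B

end Stmt6Aux

namespace Stmt6Aux

variable {p : ℕ} [Fact p.Prime] {n l : ℕ}

lemma mulVecLin_injective_int {n : ℕ} (A : Matrix (Fin n) (Fin n) ℤ) (h : A.det ≠ 0) :
    Function.Injective A.mulVecLin := by
  rw [injective_iff_map_eq_zero]
  intro z hz
  have h1 : A.adjugate *ᵥ (A *ᵥ z) = 0 := by
    rw [show A.mulVecLin z = A *ᵥ z from rfl] at hz
    rw [hz, Matrix.mulVec_zero]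
  rw [Matrix.mulVec_mulVec, Matrix.adjugate_mul] at h1
  funext i
  have h2 := congrFun h1 i
  rw [Matrix.smul_mulVec, Matrix.one_mulVec] at h2
  simpa [smul_eq_mul, h] using h2

/-- Smith normal form for square integer matrices with nonzero determinant. -/
lemma snf_matrix {n : ℕ} (A₀ : Matrix (Fin n) (Fin n) ℤ) (h : A₀.det ≠ 0) :
    ∃ (L Li Rm Ri : Matrix (Fin n) (Fin n) ℤ) (a : Fin n → ℤ),
      L * Li = 1 ∧ Li * L = 1 ∧ Rm * Ri = 1 ∧ Ri * Rm = 1 ∧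
      A₀ = L * Matrix.diagonal a * Rm := by
  classical
  set e : Module.Basis (Fin n) ℤ (Fin n → ℤ) := Pi.basisFun ℤ (Fin n) with he
  have hinj : Function.Injective A₀.mulVecLin := mulVecLin_injective_int A₀ h
  set N : Submodule ℤ (Fin n → ℤ) := LinearMap.range A₀.mulVecLin with hN
  set eC : (Fin n → ℤ) ≃ₗ[ℤ] N := LinearEquiv.ofInjective A₀.mulVecLin hinj with heC
  set bC : Module.Basis (Fin n) ℤ N := e.map eC with hbC
  obtain ⟨m, snf⟩ := N.smithNormalForm e
  have hm : m = n := by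
    have := Fintype.card_congr (snf.bN.indexEquiv bC)
    simpa using this
  subst hm
  have hbij : Function.Bijective snf.f := Finite.injective_iff_bijective.1 snf.f.injective
  set σ : Fin m ≃ Fin m := Equiv.ofBijective snf.f hbij with hσ
  refine ⟨e.toMatrix ⇑snf.bM, snf.bM.toMatrix ⇑e,
    (snf.bN.toMatrix ⇑bC).submatrix ⇑σ.symm id,
    (bC.toMatrix ⇑snf.bN).submatrix id ⇑σ.symm,
    snf.a ∘ ⇑σ.symm, ?_, ?_, ?_, ?_, ?_⟩
  · exact e.toMatrix_mul_toMatrix_flip snf.bM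
  · exact snf.bM.toMatrix_mul_toMatrix_flip e
  · have h1 : ((snf.bN.toMatrix ⇑bC).submatrix ⇑σ.symm id) *
        ((bC.toMatrix ⇑snf.bN).submatrix id ⇑σ.symm) =
        ((snf.bN.toMatrix ⇑bC) * (bC.toMatrix ⇑snf.bN)).submatrix ⇑σ.symm ⇑σ.symm := by
      rw [← Matrix.submatrix_mul_equiv (snf.bN.toMatrix ⇑bC) (bC.toMatrix ⇑snf.bN) _ (Equiv.refl _) _]
      rfl
    rw [h1, snf.bN.toMatrix_mul_toMatrix_flip bC, Matrix.submatrix_one_equiv]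
  · have h1 : ((bC.toMatrix ⇑snf.bN).submatrix id ⇑σ.symm) *
        ((snf.bN.toMatrix ⇑bC).submatrix ⇑σ.symm id) =
        ((bC.toMatrix ⇑snf.bN) * (snf.bN.toMatrix ⇑bC)).submatrix id id := by
      rw [← Matrix.submatrix_mul_equiv (bC.toMatrix ⇑snf.bN) (snf.bN.toMatrix ⇑bC) _ σ.symm _]
    rw [h1, bC.toMatrix_mul_toMatrix_flip snf.bN]
    rfl
  · -- main identity
    ext x j
    have hcolval : A₀ x j = ((bC j : Fin m → ℤ)) x := by
      have : (bC j : Fin m → ℤ) = A₀.mulVecLin (e j) := rfl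
      rw [this]
      simp [he, Matrix.mulVecLin_apply, Pi.basisFun_apply, Matrix.mulVec_single]
    have hsum : (bC j : Fin m → ℤ) =
        ∑ i : Fin m, (snf.bN.repr (bC j) i) • ((snf.bN i : Fin m → ℤ)) := by
      have := snf.bN.sum_repr (bC j)
      calc (bC j : Fin m → ℤ) = ((∑ i : Fin m, (snf.bN.repr (bC j) i) • snf.bN i : N) : Fin m → ℤ) := by
            rw [this]
        _ = ∑ i : Fin m, (snf.bN.repr (bC j) i) • ((snf.bN i : Fin m → ℤ)) := by
            rw [Submodule.coe_sum]
            simp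
    rw [hcolval, hsum]
    rw [Matrix.mul_apply]
    rw [Finset.sum_apply]
    rw [← Equiv.sum_comp σ (fun k => (e.toMatrix ⇑snf.bM * Matrix.diagonal (snf.a ∘ ⇑σ.symm)) x k *
      ((snf.bN.toMatrix ⇑bC).submatrix ⇑σ.symm id) k j)]
    apply Finset.sum_congr rfl
    intro i _
    rw [Matrix.mul_apply]
    rw [Finset.sum_eq_single (σ i)]
    · rw [Matrix.diagonal_apply_eq, Matrix.submatrix_apply, Equiv.symm_apply_apply]
      have h2 : (snf.a ∘ ⇑σ.symm) (σ i) = snf.a i := by simp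
      have h3 : e.toMatrix (⇑snf.bM) x (σ i) = snf.bM (σ i) x := by
        rw [Module.Basis.toMatrix_apply, he, Pi.basisFun_repr]
      have h4 : snf.bN.toMatrix (⇑bC) i j = snf.bN.repr (bC j) i := Module.Basis.toMatrix_apply _ _ _ _
      simp only [id_eq]
      rw [h2, h3, h4]
      have h5 : ((snf.bN i : Fin m → ℤ)) = snf.a i • (snf.bM (σ i)) := snf.snf i
      rw [h5]
      simp only [Pi.smul_apply, smul_eq_mul]
      ring
    · intro b _ hb
      rw [Matrix.diagonal_apply_ne _ hb]
      ring
    · intro hb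
      exact absurd (Finset.mem_univ (σ i)) hb

end Stmt6Aux

namespace Stmt6Aux

variable {p : ℕ} [Fact p.Prime] {n l : ℕ}

lemma mz_mul (X Y : Matrix (Fin n) (Fin n) ℤ) :
    mz p (X * Y) = mz p X * mz p Y := _root_.map_mul _ X Y

lemma mz_one : mz p (1 : Matrix (Fin n) (Fin n) ℤ) = 1 := _root_.map_one _

lemma mz_diagonal (d : Fin n → ℤ) :
    mz p (Matrix.diagonal d) = Matrix.diagonal (fun k => ((d k : ℤ_[p]))) := by
  rw [mz, RingHom.mapMatrix_apply, Matrix.diagonal_map (by simp)]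
  rfl

lemma exists_pow_mul (z : ℤ) (hz : z ≠ 0) :
    ∃ (e : ℕ) (m : ℤ), z = (p : ℤ) ^ e * m ∧ ¬ (p : ℤ) ∣ m := by
  have hp : p.Prime := Fact.out
  have hna : z.natAbs ≠ 0 := Int.natAbs_ne_zero.2 hz
  have h1 : p ^ (z.natAbs.factorization p) * (z.natAbs / p ^ (z.natAbs.factorization p)) = z.natAbs :=
    Nat.ordProj_mul_ordCompl_eq_self z.natAbs p
  have h2 : ¬ p ∣ (z.natAbs / p ^ (z.natAbs.factorization p)) := Nat.not_dvd_ordCompl hp hna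
  have h2' : ¬ (p : ℤ) ∣ ((z.natAbs / p ^ (z.natAbs.factorization p) : ℕ) : ℤ) := by
    intro hd
    exact h2 (by exact_mod_cast hd)
  have h4 : ((p : ℤ)) ^ (z.natAbs.factorization p) *
      ((z.natAbs / p ^ (z.natAbs.factorization p) : ℕ) : ℤ) = (z.natAbs : ℤ) := by
    exact_mod_cast h1
  rcases Int.natAbs_eq z with hs | hs
  · refine ⟨z.natAbs.factorization p, _, ?_, h2'⟩
    rw [h4]; exact hs
  · refine ⟨z.natAbs.factorization p,
      -((z.natAbs / p ^ (z.natAbs.factorization p) : ℕ) : ℤ), ?_, by simpa using h2'⟩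
    rw [mul_neg, h4]; exact hs

lemma norm_int_cast_eq_one (m : ℤ) (hm : ¬ (p : ℤ) ∣ m) : ‖(m : ℤ_[p])‖ = 1 := by
  refine le_antisymm (PadicInt.norm_le_one _) ?_
  by_contra hlt
  push_neg at hlt
  exact hm ((PadicInt.norm_int_lt_one_iff_dvd m).1 hlt)

lemma norm_p_pow_z (e : ℕ) : ‖(((p : ℤ) ^ e : ℤ) : ℤ_[p])‖ = (p : ℝ) ^ (-(e : ℤ)) := by
  rw [PadicInt.norm_def]
  have h : ((((p : ℤ) ^ e : ℤ) : ℤ_[p]) : ℚ_[p]) = (p : ℚ_[p]) ^ e := by push_cast; ring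
  rw [h]
  exact Padic.norm_p_pow e

/-- Surjectivity, integral step: replace an integral matrix of the right valuation
by one of determinant exactly `p ^ l`, in the same right `GL_n(ℤ_p)`-coset. -/
lemma surj_int (hn : 1 ≤ n) (A₀ : Matrix (Fin n) (Fin n) ℤ)
    (hdet : ‖((A₀.det : ℤ) : ℤ_[p])‖ = (p : ℝ) ^ (-(l : ℤ))) :
    ∃ (A : Matrix (Fin n) (Fin n) ℤ) (U : (Matrix (Fin n) (Fin n) ℤ_[p])ˣ),
      A.det = (p : ℤ) ^ l ∧ mz p A₀ * (U : Matrix (Fin n) (Fin n) ℤ_[p]) = mz p A := by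
  classical
  have hp : p.Prime := Fact.out
  have hpR1 : (1 : ℝ) < (p : ℝ) := by exact_mod_cast hp.one_lt
  have hdet0 : A₀.det ≠ 0 := by
    intro h0
    rw [h0] at hdet
    simp only [Int.cast_zero, norm_zero] at hdet
    exact absurd hdet.symm (ne_of_gt (zpow_pos (by linarith) _))
  obtain ⟨L, Li, Rm, Ri, a, hLLi, hLiL, hRmRi, hRiRm, hA₀⟩ := snf_matrix A₀ hdet0
  have hdetfact : A₀.det = L.det * (∏ k, a k) * Rm.det := by
    rw [hA₀, Matrix.det_mul, Matrix.det_mul, Matrix.det_diagonal]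
  have ha0 : ∀ k, a k ≠ 0 := by
    intro k hk
    apply hdet0
    rw [hdetfact, Finset.prod_eq_zero (Finset.mem_univ k) hk]
    ring
  choose e mm hmm hpmm using fun k => exists_pow_mul (p := p) (a k) (ha0 k)
  -- determinant factorization
  have hprod : (∏ k, a k) = (p : ℤ) ^ (∑ k, e k) * ∏ k, mm k := by
    calc (∏ k, a k) = ∏ k, ((p : ℤ) ^ e k * mm k) := Finset.prod_congr rfl (fun k _ => hmm k)
      _ = (∏ k, (p : ℤ) ^ e k) * ∏ k, mm k := Finset.prod_mul_distrib
      _ = (p : ℤ) ^ (∑ k, e k) * ∏ k, mm k := by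
          rw [Finset.prod_pow_eq_pow_sum]
  have hfact : A₀.det = (L.det * Rm.det * ∏ k, mm k) * (p : ℤ) ^ (∑ k, e k) := by
    rw [hdetfact, hprod]; ring
  -- the prime doesn't divide the unit part
  have hUL : IsUnit L.det := IsUnit.of_mul_eq_one _ (by rw [← Matrix.det_mul, hLLi, Matrix.det_one])
  have hUR : IsUnit Rm.det := IsUnit.of_mul_eq_one _ (by rw [← Matrix.det_mul, hRmRi, Matrix.det_one])
  have hppr : Prime ((p : ℤ)) := Nat.prime_iff_prime_int.1 hp
  have hndvd_unit : ∀ z : ℤ, IsUnit z → ¬ (p : ℤ) ∣ z := by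
    intro z hz hd
    exact hppr.not_unit (isUnit_of_dvd_unit hd hz)
  have hu : ¬ (p : ℤ) ∣ (L.det * Rm.det * ∏ k, mm k) := by
    intro hd
    rcases (hppr.dvd_mul.1 hd) with hd1 | hd2
    · rcases (hppr.dvd_mul.1 hd1) with hd3 | hd4
      · exact hndvd_unit _ hUL hd3
      · exact hndvd_unit _ hUR hd4
    · rcases (hppr.dvd_finset_prod_iff mm).1 hd2 with ⟨k, _, hdk⟩
      exact hpmm k hdk
  -- compute the valuation
  have hsum : (∑ k, e k) = l := by
    have hnorm : ‖((A₀.det : ℤ) : ℤ_[p])‖ =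
        (p : ℝ) ^ (-((∑ k, e k : ℕ) : ℤ)) := by
      rw [hfact]
      push_cast
      rw [norm_mul]
      have h1 : ‖((L.det * Rm.det * ∏ k, mm k : ℤ) : ℤ_[p])‖ = 1 := norm_int_cast_eq_one _ hu
      have h2 := norm_p_pow_z (p := p) (∑ k, e k)
      push_cast at h1 h2
      rw [h1, h2, one_mul]
    rw [hnorm] at hdet
    have := zpow_right_injective₀ (by linarith : (0:ℝ) < (p:ℝ)) (by linarith) hdet
    omega
  -- the sign
  set δ : ℤ := L.det * Rm.det with hδdef
  have hδunit : IsUnit δ := hUL.mul hUR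
  have hδ2 : δ * δ = 1 := by
    rcases Int.isUnit_iff.1 hδunit with h | h <;> rw [h] <;> norm_num
  set i0 : Fin n := ⟨0, hn⟩ with hi0
  set d : Fin n → ℤ := fun k => (if k = i0 then δ else 1) * (p : ℤ) ^ (e k) with hd
  set A : Matrix (Fin n) (Fin n) ℤ := L * Matrix.diagonal d * Rm with hA
  have hdetA : A.det = (p : ℤ) ^ l := by
    have hprodd : (∏ k, d k) = δ * (p : ℤ) ^ (∑ k, e k) := by
      calc (∏ k, d k)
          = (∏ k, (if k = i0 then δ else 1)) * ∏ k, (p : ℤ) ^ (e k) :=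
            Finset.prod_mul_distrib
        _ = δ * (p : ℤ) ^ (∑ k, e k) := by
            rw [Fintype.prod_ite_eq' i0 (fun _ => δ), Finset.prod_pow_eq_pow_sum]
    rw [hA, Matrix.det_mul, Matrix.det_mul, Matrix.det_diagonal, hprodd, hsum]
    calc L.det * (δ * (p:ℤ)^l) * Rm.det = (δ * δ) * (p:ℤ)^l := by rw [hδdef]; ring
      _ = (p : ℤ) ^ l := by rw [hδ2, one_mul]
  -- units over ℤ_p
  have humm : ∀ k, IsUnit ((mm k : ℤ_[p])) :=
    fun k => PadicInt.isUnit_iff.2 (norm_int_cast_eq_one _ (hpmm k))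
  set u : Fin n → ℤ_[p]ˣ := fun k => (humm k).unit with hu_def
  have hu_coe : ∀ k, ((u k : ℤ_[p])) = (mm k : ℤ_[p]) := fun k => (humm k).unit_spec
  set w : Fin n → ℤ_[p] := fun k => (if k = i0 then ((δ : ℤ) : ℤ_[p]) else 1) * ((u k)⁻¹ : ℤ_[p]ˣ) with hw
  set w' : Fin n → ℤ_[p] := fun k => (if k = i0 then ((δ : ℤ) : ℤ_[p]) else 1) * (u k : ℤ_[p]) with hw'
  have hww' : ∀ k, w k * w' k = 1 := by
    intro k
    rw [hw, hw']
    have h1 : ((u k)⁻¹ : ℤ_[p]ˣ) * ((u k : ℤ_[p])) = 1 := by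
      exact_mod_cast (u k).inv_mul
    by_cases hk : k = i0
    · subst hk
      simp only [eq_self_iff_true, if_true]
      have hδc : ((δ : ℤ) : ℤ_[p]) * ((δ : ℤ) : ℤ_[p]) = 1 := by
        rw [← Int.cast_mul, hδ2, Int.cast_one]
      have h2 : (((δ:ℤ):ℤ_[p]) * ((u i0)⁻¹ : ℤ_[p]ˣ)) * (((δ:ℤ):ℤ_[p]) * ((u i0) : ℤ_[p])) =
          (((δ:ℤ):ℤ_[p]) * ((δ:ℤ):ℤ_[p])) * (((u i0)⁻¹ : ℤ_[p]ˣ) * ((u i0) : ℤ_[p])) := by ring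
      rw [h2, hδc, h1, one_mul]
    · simp only [if_neg hk, one_mul]
      exact h1
  have hRmRi_z : mz p Rm * mz p Ri = 1 := by rw [← mz_mul, hRmRi, mz_one]
  have hRiRm_z : mz p Ri * mz p Rm = 1 := by rw [← mz_mul, hRiRm, mz_one]
  set Uval : Matrix (Fin n) (Fin n) ℤ_[p] := mz p Ri * Matrix.diagonal w * mz p Rm with hUval
  set Uinv : Matrix (Fin n) (Fin n) ℤ_[p] := mz p Ri * Matrix.diagonal w' * mz p Rm with hUinv
  have hkey : ∀ (v v' : Fin n → ℤ_[p]), (∀ k, v k * v' k = 1) →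
      (mz p Ri * Matrix.diagonal v * mz p Rm) * (mz p Ri * Matrix.diagonal v' * mz p Rm) = 1 := by
    intro v v' hvv
    calc (mz p Ri * Matrix.diagonal v * mz p Rm) * (mz p Ri * Matrix.diagonal v' * mz p Rm)
        = mz p Ri * Matrix.diagonal v * (mz p Rm * mz p Ri) * Matrix.diagonal v' * mz p Rm := by
          simp only [Matrix.mul_assoc]
      _ = mz p Ri * (Matrix.diagonal v * Matrix.diagonal v') * mz p Rm := by
          rw [hRmRi_z, Matrix.mul_one]
          simp only [Matrix.mul_assoc]
      _ = mz p Ri * mz p Rm := by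
          rw [Matrix.diagonal_mul_diagonal]
          have : (fun k => v k * v' k) = fun _ => (1 : ℤ_[p]) := funext hvv
          rw [this, Matrix.diagonal_one, Matrix.mul_one]
      _ = 1 := hRiRm_z
  have hUU : Uval * Uinv = 1 := hkey w w' hww'
  have hUU' : Uinv * Uval = 1 := hkey w' w (fun k => by rw [mul_comm]; exact hww' k)
  refine ⟨A, ⟨Uval, Uinv, hUU, hUU'⟩, hdetA, ?_⟩
  -- final computation
  show mz p A₀ * Uval = mz p A
  have hdw : ∀ k, (a k : ℤ_[p]) * w k = (d k : ℤ_[p]) := by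
    intro k
    rw [hw, hd]
    have : (a k : ℤ_[p]) = ((p : ℤ) ^ e k : ℤ) * (u k : ℤ_[p]) := by
      rw [hu_coe, ← Int.cast_mul, ← hmm k]
    rw [this]
    have h1 : ((u k : ℤ_[p])) * ((u k)⁻¹ : ℤ_[p]ˣ) = 1 := by exact_mod_cast (u k).mul_inv
    push_cast
    calc ((p:ℤ_[p]))^(e k) * (u k : ℤ_[p]) * ((if k = i0 then ((δ:ℤ):ℤ_[p]) else 1) * ((u k)⁻¹ : ℤ_[p]ˣ))
        = (if k = i0 then ((δ:ℤ):ℤ_[p]) else 1) * ((p:ℤ_[p]))^(e k) *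
          (((u k : ℤ_[p])) * ((u k)⁻¹ : ℤ_[p]ˣ)) := by ring
      _ = (if k = i0 then ((δ:ℤ):ℤ_[p]) else 1) * ((p:ℤ_[p]))^(e k) := by rw [h1, mul_one]
      _ = (if k = i0 then (δ:ℤ_[p]) else 1) * ((p:ℤ_[p]))^(e k) := by norm_cast
  calc mz p A₀ * Uval
      = (mz p L * Matrix.diagonal (fun k => (a k : ℤ_[p])) * mz p Rm) *
        (mz p Ri * Matrix.diagonal w * mz p Rm) := by
        rw [hA₀, mz_mul, mz_mul, mz_diagonal]
    _ = mz p L * Matrix.diagonal (fun k => (a k : ℤ_[p])) * (mz p Rm * mz p Ri) *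
        Matrix.diagonal w * mz p Rm := by simp only [Matrix.mul_assoc]
    _ = mz p L * (Matrix.diagonal (fun k => (a k : ℤ_[p])) * Matrix.diagonal w) * mz p Rm := by
        rw [hRmRi_z, Matrix.mul_one]
        simp only [Matrix.mul_assoc]
    _ = mz p L * Matrix.diagonal (fun k => (d k : ℤ_[p])) * mz p Rm := by
        rw [Matrix.diagonal_mul_diagonal,
          show (fun k => (a k : ℤ_[p]) * w k) = (fun k => (d k : ℤ_[p])) from funext hdw]
    _ = mz p A := by rw [hA, mz_mul, mz_mul, mz_diagonal]

end Stmt6Aux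

namespace Stmt6Aux

variable {p : ℕ} [Fact p.Prime] {n l : ℕ}

/-- Approximate an integral-entried element of `GL_n(ℚ_p)` by an integer matrix
in the same coset. -/
lemma approx (g : GL (Fin n) ℚ_[p])
    (hint : ∀ i j, InZp ((g : Matrix (Fin n) (Fin n) ℚ_[p]) i j))
    (hval : ((g : Matrix (Fin n) (Fin n) ℚ_[p]).det).valuation = (l : ℤ)) :
    ∃ (A₀ : Matrix (Fin n) (Fin n) ℤ) (D : (Matrix (Fin n) (Fin n) ℤ_[p])ˣ),
      ‖((A₀.det : ℤ) : ℤ_[p])‖ = (p : ℝ) ^ (-(l : ℤ)) ∧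
      (g : Matrix (Fin n) (Fin n) ℚ_[p]) * homZQ p n (D : Matrix (Fin n) (Fin n) ℤ_[p]) =
        mq p A₀ := by
  classical
  have hp : p.Prime := Fact.out
  set G : Matrix (Fin n) (Fin n) ℤ_[p] := Matrix.of (fun i j => (hint i j).choose) with hG
  have hGg : homZQ p n G = (g : Matrix (Fin n) (Fin n) ℚ_[p]) := by
    ext i j
    exact (hint i j).choose_spec
  have hdetgne : ((g : Matrix (Fin n) (Fin n) ℚ_[p]).det) ≠ 0 := by
    have : IsUnit ((g : Matrix (Fin n) (Fin n) ℚ_[p]).det) :=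
      (Matrix.isUnit_iff_isUnit_det _).1 g.isUnit
    exact this.ne_zero
  have hnormg : ‖((g : Matrix (Fin n) (Fin n) ℚ_[p]).det)‖ = (p : ℝ) ^ (-(l : ℤ)) := by
    rw [Padic.norm_eq_zpow_neg_valuation hdetgne, hval]
  have hdetG : ((G.det : ℤ_[p]) : ℚ_[p]) = ((g : Matrix (Fin n) (Fin n) ℚ_[p]).det) := by
    rw [← hGg]
    exact (PadicInt.Coe.ringHom (p := p)).map_det G
  have hnormG : ‖G.det‖ = (p : ℝ) ^ (-(l : ℤ)) := by
    rw [PadicInt.norm_def, hdetG]; exact hnormg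
  have hdetGne : G.det ≠ 0 := by
    intro h0
    rw [h0, norm_zero] at hnormG
    exact absurd hnormG.symm (ne_of_gt (zpow_pos (by exact_mod_cast hp.pos) _))
  have hvalG : (G.det).valuation = (l : ℤ) := by
    have h1 := PadicInt.norm_eq_zpow_neg_valuation hdetGne
    rw [hnormG] at h1
    have h2 := zpow_right_injective₀ (by exact_mod_cast hp.pos : (0:ℝ) < (p:ℝ))
      (by exact_mod_cast hp.one_lt.ne' : (p:ℝ) ≠ 1) h1
    omega
  set u : ℤ_[p]ˣ := PadicInt.unitCoeff hdetGne with hu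
  have huspec : G.det = (u : ℤ_[p]) * (p : ℤ_[p]) ^ l := by
    have := PadicInt.unitCoeff_spec hdetGne
    rwa [show G.det.valuation = l by exact_mod_cast hvalG] at this
  -- integer approximation of each entry
  have happr : ∀ i j, ∃ E : ℤ_[p],
      G i j = (((G i j).appr (l+1) : ℤ) : ℤ_[p]) + E * (p : ℤ_[p]) ^ (l+1) := by
    intro i j
    obtain ⟨E, hE⟩ := Ideal.mem_span_singleton'.1 (PadicInt.appr_spec (l+1) (G i j))
    exact ⟨E, by rw [hE]; push_cast; ring⟩
  set A₀ : Matrix (Fin n) (Fin n) ℤ := Matrix.of (fun i j => (((G i j).appr (l+1) : ℤ))) with hA₀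
  set E : Matrix (Fin n) (Fin n) ℤ_[p] := Matrix.of (fun i j => (happr i j).choose) with hE
  have hGE : mz p A₀ = G - ((p : ℤ_[p]) ^ (l+1)) • E := by
    ext i j
    have := (happr i j).choose_spec
    rw [mz_apply]
    simp only [Matrix.sub_apply, Matrix.smul_apply, hA₀, hE, Matrix.of_apply, smul_eq_mul]
    linear_combination -this
  set D : Matrix (Fin n) (Fin n) ℤ_[p] :=
    1 - (p : ℤ_[p]) • (((u⁻¹ : ℤ_[p]ˣ) : ℤ_[p]) • (G.adjugate * E)) with hD
  have hGD : G * D = mz p A₀ := by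
    have h1 : G * D = G - (p : ℤ_[p]) • (((u⁻¹ : ℤ_[p]ˣ) : ℤ_[p]) • (G.det • E)) := by
      rw [hD, Matrix.mul_sub, Matrix.mul_one, Matrix.mul_smul, Matrix.mul_smul,
        ← Matrix.mul_assoc, Matrix.mul_adjugate, Matrix.smul_mul, Matrix.one_mul]
    rw [h1, hGE]
    congr 1
    rw [smul_smul, smul_smul, huspec]
    congr 1
    have hui : ((u⁻¹ : ℤ_[p]ˣ) : ℤ_[p]) * (u : ℤ_[p]) = 1 := by exact_mod_cast u.inv_mul
    calc (p : ℤ_[p]) * ((u⁻¹ : ℤ_[p]ˣ) : ℤ_[p]) * ((u : ℤ_[p]) * (p : ℤ_[p]) ^ l)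
        = (((u⁻¹ : ℤ_[p]ˣ) : ℤ_[p]) * (u : ℤ_[p])) * (p : ℤ_[p]) ^ (l+1) := by ring
      _ = (p : ℤ_[p]) ^ (l+1) := by rw [hui, one_mul]
  -- D is a unit
  have hmapD : (PadicInt.toZMod (p := p)).mapMatrix D = 1 := by
    ext i j
    rw [RingHom.mapMatrix_apply, hD]
    simp only [Matrix.map_apply, Matrix.sub_apply, Matrix.smul_apply, smul_eq_mul,
      _root_.map_sub, _root_.map_mul]
    rw [show (PadicInt.toZMod (p := p)) ((p : ℤ_[p])) = 0 from by
      rw [map_natCast, ZMod.natCast_self]]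
    rw [zero_mul, sub_zero]
    by_cases hij : i = j <;> simp [hij, Matrix.one_apply]
  have hdetD : IsUnit D.det := by
    have h1 : (PadicInt.toZMod (p := p)) D.det = 1 := by
      rw [RingHom.map_det, hmapD, Matrix.det_one]
    rw [← IsLocalRing.notMem_maximalIdeal, ← PadicInt.ker_toZMod, RingHom.mem_ker, h1]
    exact one_ne_zero
  have hDunit : IsUnit D := (Matrix.isUnit_iff_isUnit_det D).2 hdetD
  refine ⟨A₀, hDunit.unit, ?_, ?_⟩
  · have h1 : ((A₀.det : ℤ) : ℤ_[p]) = G.det * D.det := by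
      rw [← det_mz, ← hGD, Matrix.det_mul]
    rw [h1, norm_mul, hnormG, PadicInt.isUnit_iff.1 hdetD, mul_one]
  · rw [← hGg, IsUnit.unit_spec, ← _root_.map_mul, hGD, mq_eq_homZQ_mz]

end Stmt6Aux

namespace Stmt6Aux

variable {p : ℕ} [Fact p.Prime] {n l : ℕ}

lemma Phi_surjective (hn : 1 ≤ n) :
    Function.Surjective (Phi : Quot (orbRel p n l) → Tgt p n l) := by
  rintro ⟨c, g, hgc, hint, hval⟩
  obtain ⟨A₀, D, hnorm, happrox⟩ := approx g hint hval
  obtain ⟨A, U, hdetA, hAU⟩ := surj_int hn A₀ hnorm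
  refine ⟨Quot.mk _ ⟨A, hdetA⟩, ?_⟩
  apply Subtype.ext
  show (QuotientGroup.mk (phi ⟨A, hdetA⟩) : GL (Fin n) ℚ_[p] ⧸ glZpSubgroup p n) = c
  rw [← hgc]
  set gD : GL (Fin n) ℚ_[p] := g * Units.map (homZQ p n).toMonoidHom D with hgD
  have h1 : (gD : Matrix (Fin n) (Fin n) ℚ_[p]) = mq p A₀ := by
    rw [hgD, Units.val_mul]; exact happrox
  have h2 : gD * Units.map (homZQ p n).toMonoidHom U = phi (⟨A, hdetA⟩ : Rset p n l) := by
    refine Units.ext ?_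
    rw [Units.val_mul, h1, coe_phi]
    show mq p A₀ * homZQ p n (U : Matrix (Fin n) (Fin n) ℤ_[p]) = mq p A
    have h3 := congrArg (homZQ p n) hAU
    rw [_root_.map_mul, ← mq_eq_homZQ_mz, ← mq_eq_homZQ_mz] at h3
    exact h3
  have h4 := mk_eq_of_unit_mul U h2
  have h5 := mk_eq_of_unit_mul D (hgD.symm)
  exact h4.trans h5

end Stmt6Aux


/-- The assignment `A ↦ A · GL_n(ℤ_p)` induces a well-defined bijection from the set of
orbits of `SL_n(ℤ)` acting on `R(p^l)` by right multiplication onto the set of left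
cosets `g · GL_n(ℤ_p)` in `GL_n(ℚ_p)` for which every entry of `g` lies in `ℤ_p` and
the `p`-adic valuation of `det g` equals `l`. -/
theorem stmt6 (p : ℕ) [Fact p.Prime] (n : ℕ) (hn : 1 ≤ n) (l : ℕ) :
    ∃ f : Quot (orbRel p n l) ≃
        {c : GL (Fin n) ℚ_[p] ⧸ glZpSubgroup p n |
          ∃ g : GL (Fin n) ℚ_[p],
            (QuotientGroup.mk g : GL (Fin n) ℚ_[p] ⧸ glZpSubgroup p n) = c ∧
            (∀ i j, InZp ((g : Matrix (Fin n) (Fin n) ℚ_[p]) i j)) ∧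
            ((g : Matrix (Fin n) (Fin n) ℚ_[p]).det).valuation = (l : ℤ)},
      ∀ (A : Rset p n l) (g : GL (Fin n) ℚ_[p]),
        (g : Matrix (Fin n) (Fin n) ℚ_[p]) =
            (A : Matrix (Fin n) (Fin n) ℤ).map (fun z => ((z : ℤ_[p]) : ℚ_[p])) →
        ((f (Quot.mk _ A) : {c : GL (Fin n) ℚ_[p] ⧸ glZpSubgroup p n |
            ∃ g : GL (Fin n) ℚ_[p],
              (QuotientGroup.mk g : GL (Fin n) ℚ_[p] ⧸ glZpSubgroup p n) = c ∧
              (∀ i j, InZp ((g : Matrix (Fin n) (Fin n) ℚ_[p]) i j)) ∧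
              ((g : Matrix (Fin n) (Fin n) ℚ_[p]).det).valuation = (l : ℤ)}) :
          GL (Fin n) ℚ_[p] ⧸ glZpSubgroup p n) = QuotientGroup.mk g := by
  refine ⟨Equiv.ofBijective (Stmt6Aux.Phi : Quot (orbRel p n l) → Stmt6Aux.Tgt p n l)
    ⟨Stmt6Aux.Phi_injective, Stmt6Aux.Phi_surjective hn⟩, ?_⟩
  intro A g hg
  show ((Stmt6Aux.Phi (Quot.mk _ A) : Stmt6Aux.Tgt p n l) :
    GL (Fin n) ℚ_[p] ⧸ glZpSubgroup p n) = QuotientGroup.mk g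
  have hg' : (g : Matrix (Fin n) (Fin n) ℚ_[p]) =
      Stmt6Aux.mq p (A : Matrix (Fin n) (Fin n) ℤ) := by
    rw [hg, Stmt6Aux.mq_eq_map]
  have hphig : Stmt6Aux.phi A = g := Units.ext (by rw [Stmt6Aux.coe_phi, hg'])
  show (QuotientGroup.mk (Stmt6Aux.phi A) : GL (Fin n) ℚ_[p] ⧸ glZpSubgroup p n) =
    QuotientGroup.mk g
  rw [hphig]
end
end

section
/- Let p be a prime and n ≥ 1 an integer. The image of SL_n(ℤ[1/p]) under the entrywise inclusion ℤ[1/p] ⊆ ℚ ⊆ ℝ is dense in the topological group SL_n(ℝ). -/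
open Matrix

section Aux

lemma isZInvP_zero (p : ℕ) : IsZInvP p 0 := ⟨0, 0, by norm_num⟩

lemma isZInvP_one (p : ℕ) : IsZInvP p 1 := ⟨1, 0, by norm_num⟩

lemma isZInvP_add {p : ℕ} (hp : p ≠ 0) {q r : ℚ} (hq : IsZInvP p q) (hr : IsZInvP p r) :
    IsZInvP p (q + r) := by
  obtain ⟨a, m, rfl⟩ := hq
  obtain ⟨b, k, rfl⟩ := hr
  refine ⟨a * p ^ k + b * p ^ m, m + k, ?_⟩
  have hp' : ((p : ℚ)) ≠ 0 := by exact_mod_cast hp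
  rw [div_add_div _ _ (pow_ne_zero m hp') (pow_ne_zero k hp'), ← pow_add]
  congr 1
  push_cast
  ring

lemma isZInvP_mul {p : ℕ} (hp : p ≠ 0) {q r : ℚ} (hq : IsZInvP p q) (hr : IsZInvP p r) :
    IsZInvP p (q * r) := by
  obtain ⟨a, m, rfl⟩ := hq
  obtain ⟨b, k, rfl⟩ := hr
  refine ⟨a * b, m + k, ?_⟩
  push_cast
  rw [pow_add, div_mul_div_comm]

lemma isZInvP_sum {p : ℕ} (hp : p ≠ 0) {ι : Type*} (s : Finset ι) (f : ι → ℚ)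
    (h : ∀ i ∈ s, IsZInvP p (f i)) : IsZInvP p (∑ i ∈ s, f i) := by
  classical
  induction s using Finset.induction_on with
  | empty => simpa using isZInvP_zero p
  | insert _ _ hx ih =>
    rw [Finset.sum_insert hx]
    exact isZInvP_add hp (h _ (Finset.mem_insert_self _ _))
      (ih fun i hi => h i (Finset.mem_insert_of_mem hi))

lemma transvection_entry {R : Type*} [CommRing R] {m : Type*} [Fintype m] [DecidableEq m]
    (i j k l : m) (c : R) :
    transvection i j c k l = (if k = l then 1 else 0) + (if i = k ∧ j = l then c else 0) := by
  simp [transvection, Matrix.add_apply, Matrix.one_apply, Matrix.single]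

theorem trans_diag {𝕜 : Type*} [Field 𝕜] {m : Type*} [Fintype m] [DecidableEq m]
    (i j : m) (hij : i ≠ j) (a : 𝕜) (ha : a ≠ 0) :
    transvection i j a * transvection j i (-a⁻¹) * transvection i j (a-1) *
      transvection j i 1 * transvection i j (-1)
    = diagonal (fun k => if k = i then a else if k = j then a⁻¹ else 1) := by
  have hji := hij.symm
  ext k l
  rcases eq_or_ne l i with hli | hli <;> rcases eq_or_ne l j with hlj | hlj <;>
    rcases eq_or_ne k i with hki | hki <;> rcases eq_or_ne k j with hkj | hkj <;>
    try exact absurd (hli.symm.trans hlj) hij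
  all_goals try exact absurd (hki.symm.trans hkj) hij
  all_goals
    simp only [hli, hlj, hki, hkj,
      Matrix.mul_transvection_apply_same, Matrix.mul_transvection_apply_of_ne,
      Matrix.transvection_mul_apply_same, Matrix.transvection_mul_apply_of_ne,
      ne_eq, not_false_eq_true, hij, hji]
  all_goals try subst hli
  all_goals try subst hlj
  all_goals try subst hki
  all_goals try subst hkj
  all_goals
    simp only [transvection_entry, Matrix.diagonal_apply]
  all_goals split_ifs <;> first | tauto | (field_simp; try ring)

/-- A diagonal matrix that is `a` at `i`, `a⁻¹` at `j` and `1` elsewhere satisfies any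
predicate that holds for transvections and is multiplicative. -/
lemma P_diag_pair {𝕜 : Type*} [Field 𝕜] {m : Type*} [Fintype m] [DecidableEq m]
    (P : Matrix m m 𝕜 → Prop)
    (htrans : ∀ (i j : m), i ≠ j → ∀ c : 𝕜, P (transvection i j c))
    (hmul : ∀ A B, P A → P B → P (A * B))
    (i j : m) (hij : i ≠ j) (a : 𝕜) (ha : a ≠ 0) :
    P (diagonal (fun k => if k = i then a else if k = j then a⁻¹ else 1)) := by
  rw [← trans_diag i j hij a ha]
  exact hmul _ _ (hmul _ _ (hmul _ _ (hmul _ _ (htrans i j hij a)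
    (htrans j i hij.symm _)) (htrans i j hij _)) (htrans j i hij.symm _)) (htrans i j hij _)

lemma P_diagonal {𝕜 : Type*} [Field 𝕜] {m : Type*} [Fintype m] [DecidableEq m]
    (P : Matrix m m 𝕜 → Prop) (hone : P 1)
    (htrans : ∀ (i j : m), i ≠ j → ∀ c : 𝕜, P (transvection i j c))
    (hmul : ∀ A B, P A → P B → P (A * B)) :
    ∀ s : Finset m, ∀ D : m → 𝕜, (∀ k ∉ s, D k = 1) → ∏ k ∈ s, D k = 1 → P (diagonal D) := by
  classical
  intro s
  induction s using Finset.strongInduction with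
  | _ s ih =>
    intro D hoff hprod
    rcases s.eq_empty_or_nonempty with rfl | ⟨i, hi⟩
    · have : D = fun _ => 1 := funext fun k => hoff k (Finset.notMem_empty k)
      rw [this]
      simpa [Matrix.diagonal_one] using hone
    · rcases (s.erase i).eq_empty_or_nonempty with ht | ⟨j, hj⟩
      · -- s = {i}
        have hs : s = {i} := by
          apply Finset.eq_singleton_iff_unique_mem.2
          refine ⟨hi, fun x hx => ?_⟩
          by_contra hxi
          exact (Finset.notMem_empty x) (ht ▸ Finset.mem_erase.2 ⟨hxi, hx⟩)
        have hDi : D i = 1 := by simpa [hs] using hprod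
        have : D = fun _ => 1 := by
          funext k
          by_cases hk : k = i
          · rw [hk, hDi]
          · exact hoff k (by simp [hs, hk])
        rw [this]
        simpa [Matrix.diagonal_one] using hone
      · have hji : j ≠ i := (Finset.mem_erase.1 hj).1
        have hjs : j ∈ s := (Finset.mem_erase.1 hj).2
        have ha : D i ≠ 0 := by
          intro h0
          rw [Finset.prod_eq_zero hi h0] at hprod
          exact zero_ne_one hprod
        set D' : m → 𝕜 := fun k => if k = i then 1 else if k = j then D i * D j else D k with hD'
        have keyfun : D = fun k =>
            (if k = i then D i else if k = j then (D i)⁻¹ else 1) * D' k := by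
          funext k
          by_cases hki : k = i
          · subst hki
            simp [hD']
          · by_cases hkj : k = j
            · subst hkj
              simp [hD', hki, inv_mul_cancel_left₀ ha]
            · simp [hD', hki, hkj]
        have key : diagonal D =
            (diagonal (fun k => if k = i then D i else if k = j then (D i)⁻¹ else 1)) *
              diagonal D' := by
          rw [Matrix.diagonal_mul_diagonal]
          exact congrArg diagonal keyfun
        rw [key]
        refine hmul _ _ (P_diag_pair P htrans hmul i j (Ne.symm hji) (D i) ha) ?_
        refine ih (s.erase i) (Finset.erase_ssubset hi) D' ?_ ?_
        · intro k hk
          by_cases hki : k = i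
          · simp [hD', hki]
          · have hks : k ∉ s := fun hks => hk (Finset.mem_erase.2 ⟨hki, hks⟩)
            have hkj : k ≠ j := fun h => hks (h ▸ hjs)
            simp [hD', hki, hkj, hoff k hks]
        · have h1 : ∏ k ∈ s.erase i, D' k = D' j * ∏ k ∈ (s.erase i).erase j, D' k :=
            (Finset.mul_prod_erase _ _ hj).symm
          have h2 : ∏ k ∈ (s.erase i).erase j, D' k = ∏ k ∈ (s.erase i).erase j, D k := by
            apply Finset.prod_congr rfl
            intro k hk
            have hkj : k ≠ j := (Finset.mem_erase.1 hk).1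
            have hki : k ≠ i := (Finset.mem_erase.1 (Finset.mem_erase.1 hk).2).1
            simp [hD', hki, hkj]
          have h3 : D' j = D i * D j := by simp [hD', hji]
          have h4 : D j * ∏ k ∈ (s.erase i).erase j, D k = ∏ k ∈ s.erase i, D k :=
            Finset.mul_prod_erase _ _ hj
          have h5 : D i * ∏ k ∈ s.erase i, D k = ∏ k ∈ s, D k :=
            Finset.mul_prod_erase _ _ hi
          rw [h1, h2, h3, mul_assoc, h4, h5, hprod]

/-- Every determinant-one matrix over a field satisfies any predicate that holds for
transvections and is multiplicative (and holds for `1`). -/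
lemma P_det_one {𝕜 : Type*} [Field 𝕜] {m : Type*} [Fintype m] [DecidableEq m]
    (P : Matrix m m 𝕜 → Prop) (hone : P 1)
    (htrans : ∀ (i j : m), i ≠ j → ∀ c : 𝕜, P (transvection i j c))
    (hmul : ∀ A B, P A → P B → P (A * B)) :
    ∀ M : Matrix m m 𝕜, M.det = 1 → P M := by
  classical
  intro M hM
  apply Matrix.diagonal_transvection_induction P M
  · intro D hD
    rw [hM, Matrix.det_diagonal] at hD
    exact P_diagonal P hone htrans hmul Finset.univ D (fun k hk => absurd (Finset.mem_univ k) hk)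
      hD
  · intro t
    rcases t with ⟨i, j, hij, c⟩
    simpa [Matrix.TransvectionStruct.toMatrix] using htrans i j hij c
  · exact hmul

/-- `ℤ[1/p]` is dense in `ℝ`. -/
lemma dense_ZInvP {p : ℕ} (hp : p.Prime) (x : ℝ) :
    x ∈ closure {y : ℝ | ∃ (a : ℤ) (m : ℕ), y = (a : ℝ) / (p : ℝ) ^ m} := by
  rw [Metric.mem_closure_iff]
  intro ε hε
  have hp1 : (1 : ℝ) < (p : ℝ) := by exact_mod_cast hp.one_lt
  obtain ⟨m, hm⟩ : ∃ m : ℕ, 1 / ε < (p : ℝ) ^ m := pow_unbounded_of_one_lt _ hp1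
  have hpm : (0 : ℝ) < (p : ℝ) ^ m := pow_pos (by linarith) m
  have hmε : 1 / (p : ℝ) ^ m < ε := by
    rw [div_lt_iff₀ hpm]
    rw [div_lt_iff₀ hε] at hm
    linarith [mul_comm ε ((p : ℝ) ^ m)]
  refine ⟨(⌊x * (p : ℝ) ^ m⌋ : ℝ) / (p : ℝ) ^ m, ⟨⌊x * (p : ℝ) ^ m⌋, m, rfl⟩, ?_⟩
  rw [Real.dist_eq, abs_lt]
  have h1 : (⌊x * (p : ℝ) ^ m⌋ : ℝ) ≤ x * (p : ℝ) ^ m := Int.floor_le _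
  have h2 : x * (p : ℝ) ^ m < ⌊x * (p : ℝ) ^ m⌋ + 1 := Int.lt_floor_add_one _
  constructor
  · rw [neg_lt, ← sub_lt_iff_lt_add'] at *
    rw [show -(x - (⌊x * (p : ℝ) ^ m⌋ : ℝ) / (p : ℝ) ^ m) =
      (⌊x * (p : ℝ) ^ m⌋ : ℝ) / (p : ℝ) ^ m - x by ring]
    have : (⌊x * (p : ℝ) ^ m⌋ : ℝ) / (p : ℝ) ^ m - x ≤ 0 := by
      rw [sub_nonpos, div_le_iff₀ hpm]
      exact h1
    linarith
  · have : x - (⌊x * (p : ℝ) ^ m⌋ : ℝ) / (p : ℝ) ^ m < 1 / (p : ℝ) ^ m := by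
      rw [sub_lt_iff_lt_add, ← add_div, lt_div_iff₀ hpm]
      linarith [mul_comm x ((p : ℝ) ^ m)]
    linarith

end Aux

/-- `SL_n(ℤ[1/p])` is dense in `SL_n(ℝ)`: every real matrix of determinant one lies in
the closure (inside the space of `n × n` real matrices, which induces the topology of
`SL_n(ℝ)`) of the set of images of elements of `SL_n(ℚ)` with entries in `ℤ[1/p]`. -/
theorem stmt8 (p : ℕ) (hp : p.Prime) (n : ℕ) (hn : 1 ≤ n) :
    ∀ A : Matrix (Fin n) (Fin n) ℝ, A.det = 1 →
      A ∈ closure {B : Matrix (Fin n) (Fin n) ℝ |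
        ∃ γ : Matrix.SpecialLinearGroup (Fin n) ℚ,
          (∀ i j, IsZInvP p (γ.1 i j)) ∧ B = (γ : Matrix (Fin n) (Fin n) ℚ).map
            (fun q => (q : ℝ))} := by
  intro A hA
  set S : Set (Matrix (Fin n) (Fin n) ℝ) := {B : Matrix (Fin n) (Fin n) ℝ |
        ∃ γ : Matrix.SpecialLinearGroup (Fin n) ℚ,
          (∀ i j, IsZInvP p (γ.1 i j)) ∧ B = (γ : Matrix (Fin n) (Fin n) ℚ).map
            (fun q => (q : ℝ))} with hS
  have hp0 : p ≠ 0 := hp.ne_zero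
  -- `1 ∈ S`
  have hone : (1 : Matrix (Fin n) (Fin n) ℝ) ∈ S := by
    refine ⟨1, fun i j => ?_, ?_⟩
    · rw [Matrix.SpecialLinearGroup.coe_one, Matrix.one_apply]
      split_ifs
      exacts [isZInvP_one p, isZInvP_zero p]
    · rw [Matrix.SpecialLinearGroup.coe_one]
      ext i j
      simp [Matrix.map_apply, Matrix.one_apply]
      split_ifs <;> simp
  -- `S` is closed under multiplication
  have hSmul : ∀ B C, B ∈ S → C ∈ S → B * C ∈ S := by
    rintro B C ⟨γ, hγ, rfl⟩ ⟨δ, hδ, rfl⟩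
    refine ⟨γ * δ, fun i j => ?_, ?_⟩
    · rw [Matrix.SpecialLinearGroup.coe_mul, Matrix.mul_apply]
      exact isZInvP_sum hp0 _ _ fun k _ => isZInvP_mul hp0 (hγ i k) (hδ k j)
    · rw [Matrix.SpecialLinearGroup.coe_mul]
      rw [show (fun q : ℚ => (q : ℝ)) = ⇑(Rat.castHom ℝ) from rfl, Matrix.map_mul]
  -- closure of S is closed under multiplication
  have hmul : ∀ B C, B ∈ closure S → C ∈ closure S → B * C ∈ closure S := by
    intro B C hB hC
    have hcont : Continuous (fun q : Matrix (Fin n) (Fin n) ℝ × Matrix (Fin n) (Fin n) ℝ =>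
        q.1 * q.2) := continuous_mul
    have hmem : (B, C) ∈ closure (S ×ˢ S) := by
      rw [closure_prod_eq]
      exact ⟨hB, hC⟩
    have := map_mem_closure hcont hmem
      (fun (x : Matrix (Fin n) (Fin n) ℝ × Matrix (Fin n) (Fin n) ℝ)
        (hx : x ∈ S ×ˢ S) => hSmul x.1 x.2 hx.1 hx.2)
    exact this
  -- transvections lie in the closure of S
  have htrans : ∀ (i j : Fin n), i ≠ j → ∀ c : ℝ, transvection i j c ∈ closure S := by
    intro i j hij c
    have hcont : Continuous (fun c : ℝ => transvection i j c) := by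
      apply continuous_matrix
      intro k l
      simp only [transvection_entry]
      by_cases h : i = k ∧ j = l
      · simp only [h, and_self, if_true]
        exact Continuous.add continuous_const continuous_id
      · simp only [h, if_false]
        exact continuous_const
    have hmaps : Set.MapsTo (fun c : ℝ => transvection i j c)
        {y : ℝ | ∃ (a : ℤ) (m : ℕ), y = (a : ℝ) / (p : ℝ) ^ m} S := by
      rintro x ⟨a, m, rfl⟩
      set q : ℚ := (a : ℚ) / (p : ℚ) ^ m with hq
      have hqx : (q : ℝ) = (a : ℝ) / (p : ℝ) ^ m := by push_cast [hq]; ring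
      refine ⟨⟨transvection i j q, by simp [Matrix.det_transvection_of_ne i j hij]⟩,
        fun k l => ?_, ?_⟩
      · show IsZInvP p (transvection i j q k l)
        rw [transvection_entry]
        refine isZInvP_add hp0 ?_ ?_ <;> split_ifs
        exacts [isZInvP_one p, isZInvP_zero p, ⟨a, m, rfl⟩, isZInvP_zero p]
      · ext k l
        simp only [Matrix.map_apply, transvection_entry, ← hqx]
        push_cast
        split_ifs <;> simp
    exact map_mem_closure hcont (by simpa using dense_ZInvP hp c) hmaps
  exact P_det_one (· ∈ closure S) (subset_closure hone) htrans hmul A hA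
end

section
/- Let n ≥ 2 be an integer, p a prime, and d > 0, δ > 0 real numbers. There exists a constant C > 0 (depending only on n, p, d, δ) such that the following holds for every real T ≥ 1, every l ∈ ℕ, every finite set F, and every function θ : F → ℝ with 0 ≤ θ(φ) ≤ (n−1)/2 for all φ ∈ F: if for every θ₀ ∈ [0, (n−1)/2] the cardinality of {φ ∈ F : θ(φ) ≥ θ₀} is at most T^{d(1 − 2θ₀/(n−1)) + δ}, then Σ_{φ∈F} p^{2·l·θ(φ)} ≤ C · (T·p^l)^δ · (T^d + p^{l(n−1)}). (This is one direction of the equivalence between the Langlands-parameter and Hecke-eigenvalue versions of Sarnak's density hypothesis.) -/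
open Finset

private lemma stmt9_key {A B t : ℝ} (hA : 0 < A) (hB : 0 < B)
    (ht0 : 0 ≤ t) (ht1 : t ≤ 1) : A ^ (1 - t) * B ^ t ≤ A + B := by
  have hAB : 0 < A + B := by linarith
  calc A ^ (1 - t) * B ^ t
      ≤ (A + B) ^ (1 - t) * (A + B) ^ t := by
        apply mul_le_mul
        · exact Real.rpow_le_rpow hA.le (by linarith) (by linarith)
        · exact Real.rpow_le_rpow hB.le (by linarith) ht0
        · positivity
        · positivity
    _ = (A + B) ^ ((1 - t) + t) := (Real.rpow_add hAB _ _).symm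
    _ = A + B := by norm_num

/-- One direction of the equivalence between the Langlands-parameter and
Hecke-eigenvalue versions of Sarnak's density hypothesis: a density bound on the number
of `φ` with `θ φ ≥ θ₀` implies the average bound `Σ_φ p^(2lθ(φ)) ≤ C (T p^l)^δ (T^d + p^(l(n-1)))`. -/
theorem stmt9 (n : ℕ) (hn : 2 ≤ n) (p : ℕ) (hp : p.Prime) (d δ : ℝ)
    (hd : 0 < d) (hδ : 0 < δ) :
    ∃ C : ℝ, 0 < C ∧
      ∀ (T : ℝ), 1 ≤ T → ∀ (l : ℕ) (F : Type) [Fintype F] (θ : F → ℝ),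
        (∀ φ : F, 0 ≤ θ φ ∧ θ φ ≤ ((n : ℝ) - 1) / 2) →
        (∀ θ₀ : ℝ, 0 ≤ θ₀ → θ₀ ≤ ((n : ℝ) - 1) / 2 →
          (Nat.card {φ : F // θ₀ ≤ θ φ} : ℝ) ≤
            T ^ (d * (1 - 2 * θ₀ / ((n : ℝ) - 1)) + δ)) →
        ∑ φ : F, (p : ℝ) ^ (2 * (l : ℝ) * θ φ) ≤
          C * (T * (p : ℝ) ^ l) ^ δ * (T ^ d + (p : ℝ) ^ (l * (n - 1))) := by
  classical
  set K : ℕ := max 1 ⌈((n : ℝ) - 1) / δ⌉₊ with hKdef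
  have hK1 : 1 ≤ K := le_max_left _ _
  have hKpos : (0 : ℝ) < K := by exact_mod_cast hK1
  have hn1 : (1 : ℝ) ≤ (n : ℝ) - 1 := by
    have : (2 : ℝ) ≤ n := by exact_mod_cast hn
    linarith
  have hn1pos : (0 : ℝ) < (n : ℝ) - 1 := by linarith
  have hKδ : ((n : ℝ) - 1) / K ≤ δ := by
    rw [div_le_iff₀ hKpos]
    have h1 : ((n : ℝ) - 1) / δ ≤ K := by
      have h2 : ⌈((n : ℝ) - 1) / δ⌉₊ ≤ K := le_max_right _ _
      exact le_trans (Nat.le_ceil _) (by exact_mod_cast h2)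
    rw [div_le_iff₀ hδ] at h1
    linarith
  refine ⟨K, hKpos, ?_⟩
  intro T hT l F _ θ hθ hcount
  have hT0 : (0 : ℝ) < T := lt_of_lt_of_le one_pos hT
  have hp1 : (1 : ℝ) ≤ (p : ℝ) := by exact_mod_cast hp.one_lt.le
  have hp0 : (0 : ℝ) < (p : ℝ) := lt_of_lt_of_le one_pos hp1
  set step : ℝ := ((n : ℝ) - 1) / (2 * K) with hstep
  have hstep_pos : 0 < step := div_pos hn1pos (by positivity)
  have hKstep : (K : ℝ) * step = ((n : ℝ) - 1) / 2 := by
    rw [hstep]; field_simp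
  set g : F → ℕ := fun φ => min ⌊θ φ / step⌋₊ (K - 1) with hg
  have hcastl : ((l * (n - 1) : ℕ) : ℝ) = (l : ℝ) * ((n : ℝ) - 1) := by
    push_cast [Nat.cast_sub (by omega : 1 ≤ n)]
    ring
  set B : ℝ := (p : ℝ) ^ (l * (n - 1)) with hBdef
  have hB0 : (0 : ℝ) < B := by positivity
  have hA0 : (0 : ℝ) < T ^ d := Real.rpow_pos_of_pos hT0 d
  have hmaps : ∀ φ ∈ (univ : Finset F), g φ ∈ Finset.range K := by
    intro φ _
    rw [Finset.mem_range]
    exact lt_of_le_of_lt (min_le_right _ _) (by omega)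
  have hfiber : ∀ j ∈ Finset.range K,
      (∑ φ ∈ univ.filter (fun φ => g φ = j), (p : ℝ) ^ (2 * (l : ℝ) * θ φ)) ≤
        (T * (p : ℝ) ^ l) ^ δ * (T ^ d + B) := by
    intro j hj
    rw [Finset.mem_range] at hj
    set t : ℝ := (j : ℝ) / K with ht
    have ht0 : 0 ≤ t := by positivity
    have ht1 : t ≤ 1 := by
      rw [ht, div_le_one hKpos]
      exact_mod_cast hj.le
    -- upper bound on θ in the fiber
    have hθub : ∀ φ : F, g φ = j → θ φ ≤ ((j : ℝ) + 1) * step := by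
      intro φ hφ
      rcases le_or_gt ⌊θ φ / step⌋₊ (K - 1) with h | h
      · have hj' : j = ⌊θ φ / step⌋₊ := by rw [← hφ, hg]; simp [min_eq_left h]
        have : θ φ / step < (⌊θ φ / step⌋₊ : ℝ) + 1 := Nat.lt_floor_add_one _
        rw [div_lt_iff₀ hstep_pos] at this
        rw [hj']
        linarith
      · have hj' : j = K - 1 := by rw [← hφ, hg]; simp [min_eq_right h.le]
        have h2 : ((j : ℝ) + 1) = (K : ℝ) := by
          rw [hj']
          have : (1 : ℕ) ≤ K := hK1
          push_cast [Nat.cast_sub this]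
          ring
        rw [h2, hKstep]
        exact (hθ φ).2
    -- elementwise bound
    have helt : ∀ φ ∈ univ.filter (fun φ => g φ = j),
        (p : ℝ) ^ (2 * (l : ℝ) * θ φ) ≤ (p : ℝ) ^ (2 * (l : ℝ) * (((j : ℝ) + 1) * step)) := by
      intro φ hφ
      rw [Finset.mem_filter] at hφ
      apply Real.rpow_le_rpow_of_exponent_le hp1
      exact mul_le_mul_of_nonneg_left (hθub φ hφ.2) (by positivity)
    -- cardinality bound
    have hcard : (((univ : Finset F).filter (fun φ => g φ = j)).card : ℝ) ≤
        T ^ (d * (1 - t) + δ) := by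
      have hsub : (univ : Finset F).filter (fun φ => g φ = j) ⊆
          (univ : Finset F).filter (fun φ => (j : ℝ) * step ≤ θ φ) := by
        intro φ hφ
        rw [Finset.mem_filter] at hφ ⊢
        refine ⟨hφ.1, ?_⟩
        have hjle : j ≤ ⌊θ φ / step⌋₊ := by
          rw [← hφ.2, hg]; exact min_le_left _ _
        have h1 : (j : ℝ) ≤ (⌊θ φ / step⌋₊ : ℝ) := by exact_mod_cast hjle
        have h2 : (⌊θ φ / step⌋₊ : ℝ) ≤ θ φ / step := Nat.floor_le (div_nonneg (hθ φ).1 hstep_pos.le)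
        have h3 : (j : ℝ) ≤ θ φ / step := le_trans h1 h2
        rw [le_div_iff₀ hstep_pos] at h3
        linarith
      have hθ₀1 : (0 : ℝ) ≤ (j : ℝ) * step := by positivity
      have hθ₀2 : (j : ℝ) * step ≤ ((n : ℝ) - 1) / 2 := by
        rw [← hKstep]
        have : (j : ℝ) ≤ K := by exact_mod_cast hj.le
        nlinarith [hstep_pos]
      have hc := hcount ((j : ℝ) * step) hθ₀1 hθ₀2
      have hcardeq : (Nat.card {φ : F // (j : ℝ) * step ≤ θ φ} : ℝ) =
          (((univ : Finset F).filter (fun φ => (j : ℝ) * step ≤ θ φ)).card : ℝ) := by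
        rw [Nat.card_eq_fintype_card, Fintype.card_subtype]
      have hexp : d * (1 - 2 * ((j : ℝ) * step) / ((n : ℝ) - 1)) + δ = d * (1 - t) + δ := by
        rw [hstep, ht]
        field_simp
      calc (((univ : Finset F).filter (fun φ => g φ = j)).card : ℝ)
          ≤ (((univ : Finset F).filter (fun φ => (j : ℝ) * step ≤ θ φ)).card : ℝ) := by
            exact_mod_cast Finset.card_le_card hsub
        _ ≤ T ^ (d * (1 - t) + δ) := by rw [← hcardeq, ← hexp]; exact hc
    -- combine
    have hE : 2 * (l : ℝ) * (((j : ℝ) + 1) * step) =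
        (l : ℝ) * ((n : ℝ) - 1) / K + (l : ℝ) * ((n : ℝ) - 1) * t := by
      rw [hstep, ht]
      field_simp
      ring
    calc (∑ φ ∈ univ.filter (fun φ => g φ = j), (p : ℝ) ^ (2 * (l : ℝ) * θ φ))
        ≤ (((univ : Finset F).filter (fun φ => g φ = j)).card : ℝ) *
            (p : ℝ) ^ (2 * (l : ℝ) * (((j : ℝ) + 1) * step)) := by
          have := Finset.sum_le_card_nsmul _ _ _ helt
          rwa [nsmul_eq_mul] at this
      _ ≤ T ^ (d * (1 - t) + δ) * (p : ℝ) ^ (2 * (l : ℝ) * (((j : ℝ) + 1) * step)) := by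
          apply mul_le_mul_of_nonneg_right hcard (by positivity)
      _ = (T ^ δ * (p : ℝ) ^ ((l : ℝ) * ((n : ℝ) - 1) / K)) *
            ((T ^ d) ^ (1 - t) * B ^ t) := by
          rw [hE, Real.rpow_add hp0, Real.rpow_add hT0, ← Real.rpow_mul hT0.le,
            hBdef, ← Real.rpow_natCast (p : ℝ) (l * (n - 1)), ← Real.rpow_mul hp0.le, hcastl]
          ring
      _ ≤ (T * (p : ℝ) ^ l) ^ δ * (T ^ d + B) := by
          apply mul_le_mul
          · rw [Real.mul_rpow hT0.le (by positivity), ← Real.rpow_natCast (p : ℝ) l,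
              ← Real.rpow_mul hp0.le]
            apply mul_le_mul_of_nonneg_left _ (by positivity)
            apply Real.rpow_le_rpow_of_exponent_le hp1
            calc (l : ℝ) * ((n : ℝ) - 1) / K = (l : ℝ) * (((n : ℝ) - 1) / K) := by ring
              _ ≤ (l : ℝ) * δ := mul_le_mul_of_nonneg_left hKδ (by positivity)
              _ = (l : ℝ) * δ := rfl
          · exact stmt9_key hA0 hB0 ht0 ht1
          · positivity
          · positivity
  rw [← Finset.sum_fiberwise_of_maps_to hmaps]
  calc (∑ j ∈ Finset.range K, ∑ φ ∈ univ.filter (fun φ => g φ = j), (p : ℝ) ^ (2 * (l : ℝ) * θ φ))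
      ≤ ∑ _j ∈ Finset.range K, (T * (p : ℝ) ^ l) ^ δ * (T ^ d + B) :=
        Finset.sum_le_sum hfiber
    _ = (K : ℝ) * (T * (p : ℝ) ^ l) ^ δ * (T ^ d + B) := by
        rw [Finset.sum_const, Finset.card_range, nsmul_eq_mul]; ring
end

section
/- Let n ≥ 2 be an integer, p a prime, and d > 0, δ > 0, C₁ > 0, c > 0 real numbers. There exists a constant C₂ > 0 (depending only on n, p, d, δ, C₁, c) such that the following holds for every real T ≥ 1 with d·log T/((n−1)·log p) ≥ n + 2, every finite set F, every function θ : F → ℝ with 0 ≤ θ(φ) ≤ (n−1)/2, and every function λ : F × ℕ → ℝ: if (i) for every l ∈ ℕ with p^{l(n−1)} ≤ T^d one has Σ_{φ∈F} λ(φ, l)² ≤ C₁ · (T·p^l)^δ · (T^d + p^{l(n−1)}), and (ii) for every φ ∈ F and every integer k ≥ n + 1 one has Σ_{l=0}^{k} λ(φ, l)² ≥ c · p^{2·k·θ(φ)}, then for every θ₀ ∈ [0, (n−1)/2] the cardinality of {φ ∈ F : θ(φ) ≥ θ₀} is at most C₂ · T^{d(1 − 2θ₀/(n−1)) + δ(1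 + d/(n−1))}. (This is the other direction of the equivalence between the Hecke-eigenvalue and Langlands-parameter versions of Sarnak's density hypothesis.) -/
open Finset

set_option maxHeartbeats 1000000 in

/-- The other direction of the equivalence between the Hecke-eigenvalue and
Langlands-parameter versions of Sarnak's density hypothesis: average bounds on the
`λ(φ, l)²`, together with the lower bound `Σ_{l ≤ k} λ(φ, l)² ≥ c p^(2kθ(φ))`, imply a
density bound on the number of `φ` with `θ φ ≥ θ₀`. -/
theorem stmt10 (n : ℕ) (hn : 2 ≤ n) (p : ℕ) (hp : p.Prime) (d δ C₁ c : ℝ)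
    (hd : 0 < d) (hδ : 0 < δ) (hC₁ : 0 < C₁) (hc : 0 < c) :
    ∃ C₂ : ℝ, 0 < C₂ ∧
      ∀ (T : ℝ), 1 ≤ T → ((n : ℝ) + 2) ≤ d * Real.log T / (((n : ℝ) - 1) * Real.log p) →
      ∀ (F : Type) [Fintype F] (θ : F → ℝ) (lam : F → ℕ → ℝ),
        (∀ φ : F, 0 ≤ θ φ ∧ θ φ ≤ ((n : ℝ) - 1) / 2) →
        (∀ l : ℕ, (p : ℝ) ^ (l * (n - 1)) ≤ T ^ d →
          ∑ φ : F, (lam φ l) ^ 2 ≤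
            C₁ * (T * (p : ℝ) ^ l) ^ δ * (T ^ d + (p : ℝ) ^ (l * (n - 1)))) →
        (∀ (φ : F) (k : ℕ), n + 1 ≤ k →
          c * (p : ℝ) ^ (2 * (k : ℝ) * θ φ) ≤ ∑ l ∈ Finset.range (k + 1), (lam φ l) ^ 2) →
        ∀ θ₀ : ℝ, 0 ≤ θ₀ → θ₀ ≤ ((n : ℝ) - 1) / 2 →
          (Nat.card {φ : F // θ₀ ≤ θ φ} : ℝ) ≤
            C₂ * T ^ (d * (1 - 2 * θ₀ / ((n : ℝ) - 1)) + δ * (1 + d / ((n : ℝ) - 1))) := by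
  have hp0 : (0 : ℝ) < p := by exact_mod_cast hp.pos
  have hp1 : (1 : ℝ) < p := by exact_mod_cast hp.one_lt
  have hL : 0 < Real.log p := Real.log_pos hp1
  have hn1 : (0 : ℝ) < (n : ℝ) - 1 := by
    have : (2 : ℝ) ≤ (n : ℝ) := by exact_mod_cast hn
    linarith
  have hDL : 0 < ((n : ℝ) - 1) * Real.log p := mul_pos hn1 hL
  set R : ℝ := (p : ℝ) ^ δ with hRdef
  have hR1 : 1 < R := by
    rw [hRdef]
    exact Real.one_lt_rpow_iff_of_pos hp0 |>.2 (Or.inl ⟨hp1, hδ⟩)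
  have hR0 : 0 < R := lt_trans one_pos hR1
  have hpn : (0 : ℝ) < (p : ℝ) ^ ((n : ℝ) - 1) := Real.rpow_pos_of_pos hp0 _
  refine ⟨2 * C₁ * R * (p : ℝ) ^ ((n : ℝ) - 1) / (c * (R - 1)), ?_, ?_⟩
  · apply div_pos (by positivity) (mul_pos hc (by linarith))
  intro T hT hTn F _ θ lam hθ hyp1 hyp2 θ₀ hθ₀0 hθ₀1
  set C₂ : ℝ := 2 * C₁ * R * (p : ℝ) ^ ((n : ℝ) - 1) / (c * (R - 1)) with hC₂def
  have hT0 : (0 : ℝ) < T := lt_of_lt_of_le one_pos hT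
  set x : ℝ := d * Real.log T / (((n : ℝ) - 1) * Real.log p) with hxdef
  have hx0 : (0 : ℝ) ≤ x := le_trans (by positivity) hTn
  set k : ℕ := ⌊x⌋₊ with hkdef
  have hkn : n + 2 ≤ k := by
    apply Nat.le_floor
    push_cast
    exact hTn
  have hkx : (k : ℝ) ≤ x := Nat.floor_le hx0
  have hxk : x < (k : ℝ) + 1 := Nat.lt_floor_add_one x
  have hkL : (k : ℝ) * (((n : ℝ) - 1) * Real.log p) ≤ d * Real.log T :=
    (le_div_iff₀ hDL).1 hkx
  have hkL' : d * Real.log T ≤ ((k : ℝ) + 1) * (((n : ℝ) - 1) * Real.log p) :=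
    le_of_lt ((div_lt_iff₀ hDL).1 hxk)
  clear_value x k
  -- Lemma A : for l ≤ k, p^(l(n-1)) ≤ T^d
  have hA : ∀ l : ℕ, l ≤ k → (p : ℝ) ^ (l * (n - 1)) ≤ T ^ d := by
    intro l hl
    have hcast : ((l * (n - 1) : ℕ) : ℝ) = (l : ℝ) * ((n : ℝ) - 1) := by
      push_cast [Nat.cast_sub (by omega : 1 ≤ n)]
      ring
    have h1 : (p : ℝ) ^ (l * (n - 1)) = Real.exp (Real.log p * ((l : ℝ) * ((n : ℝ) - 1))) := by
      rw [← Real.rpow_natCast (p : ℝ) (l * (n - 1)), Real.rpow_def_of_pos hp0, hcast]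
    rw [h1, Real.rpow_def_of_pos hT0]
    apply Real.exp_le_exp.2
    have hlk : (l : ℝ) ≤ (k : ℝ) := by exact_mod_cast hl
    nlinarith [mul_le_mul_of_nonneg_right hlk hDL.le]
  -- Lemma B : p^(kδ) ≤ T^(dδ/(n-1))
  have hB : (p : ℝ) ^ ((k : ℝ) * δ) ≤ T ^ (d * δ / ((n : ℝ) - 1)) := by
    rw [Real.rpow_def_of_pos hp0, Real.rpow_def_of_pos hT0]
    apply Real.exp_le_exp.2
    rw [mul_div_assoc', le_div_iff₀ hn1]
    nlinarith [mul_le_mul_of_nonneg_right hkL hδ.le]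
  -- Lemma C : T^(2dθ₀/(n-1)) ≤ p^(n-1) * p^(2kθ₀)
  have hθ₀' : 2 * θ₀ ≤ (n : ℝ) - 1 := by linarith
  have hC : T ^ (2 * d * θ₀ / ((n : ℝ) - 1)) ≤
      (p : ℝ) ^ ((n : ℝ) - 1) * (p : ℝ) ^ (2 * (k : ℝ) * θ₀) := by
    rw [← Real.rpow_add hp0, Real.rpow_def_of_pos hp0, Real.rpow_def_of_pos hT0]
    apply Real.exp_le_exp.2
    rw [mul_div_assoc', div_le_iff₀ hn1]
    nlinarith [mul_le_mul_of_nonneg_right hkL' (by positivity : (0:ℝ) ≤ 2 * θ₀),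
      mul_nonneg (mul_nonneg (by positivity : (0:ℝ) ≤ 2 * θ₀) hn1.le) hL.le,
      mul_le_mul_of_nonneg_right hθ₀' (mul_nonneg hn1.le hL.le)]
  -- the counting set
  set S : Finset F := Finset.univ.filter (fun φ => θ₀ ≤ θ φ) with hSdef
  have hcard : (Nat.card {φ : F // θ₀ ≤ θ φ} : ℝ) = (S.card : ℝ) := by
    rw [Nat.card_eq_fintype_card, Fintype.card_subtype]
  set P0 : ℝ := (p : ℝ) ^ (2 * (k : ℝ) * θ₀) with hP0def
  have hP0 : 0 < P0 := Real.rpow_pos_of_pos hp0 _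
  have hSmem : ∀ φ ∈ S, θ₀ ≤ θ φ := fun φ hφ => (Finset.mem_filter.1 hφ).2
  clear_value S P0 C₂
  -- Step 1 : card bound from the lower bound hypothesis
  have step1 : (S.card : ℝ) * (c * P0) ≤ ∑ φ ∈ S, ∑ l ∈ Finset.range (k + 1), (lam φ l) ^ 2 := by
    rw [← nsmul_eq_mul]
    apply Finset.card_nsmul_le_sum
    intro φ hφ
    have hθφ : θ₀ ≤ θ φ := hSmem φ hφ
    have h2 : c * P0 ≤ c * (p : ℝ) ^ (2 * (k : ℝ) * θ φ) := by
      rw [hP0def]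
      apply mul_le_mul_of_nonneg_left _ hc.le
      apply Real.rpow_le_rpow_of_exponent_le hp1.le
      have h0 : (0 : ℝ) ≤ 2 * (k : ℝ) := by positivity
      calc 2 * (k : ℝ) * θ₀ = 2 * (k : ℝ) * θ₀ := rfl
        _ ≤ 2 * (k : ℝ) * θ φ := mul_le_mul_of_nonneg_left hθφ h0
    exact h2.trans (hyp2 φ k (by omega))
  -- Step 2 : enlarge the sum to all of F and swap
  have step2 : ∑ φ ∈ S, ∑ l ∈ Finset.range (k + 1), (lam φ l) ^ 2 ≤
      ∑ l ∈ Finset.range (k + 1), ∑ φ : F, (lam φ l) ^ 2 := by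
    calc ∑ φ ∈ S, ∑ l ∈ Finset.range (k + 1), (lam φ l) ^ 2
        ≤ ∑ φ : F, ∑ l ∈ Finset.range (k + 1), (lam φ l) ^ 2 := by
          apply Finset.sum_le_sum_of_subset_of_nonneg (Finset.subset_univ S)
          intro i _ _
          positivity
      _ = ∑ l ∈ Finset.range (k + 1), ∑ φ : F, (lam φ l) ^ 2 := Finset.sum_comm
  -- Step 3 : apply the average bound termwise
  have step3 : ∑ l ∈ Finset.range (k + 1), ∑ φ : F, (lam φ l) ^ 2 ≤
      ∑ l ∈ Finset.range (k + 1), (2 * C₁ * T ^ (d + δ)) * R ^ l := by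
    apply Finset.sum_le_sum
    intro l hl
    have hlk : l ≤ k := Nat.lt_succ_iff.1 (Finset.mem_range.1 hl)
    refine (hyp1 l (hA l hlk)).trans ?_
    have e1 : (T * (p : ℝ) ^ l) ^ δ = T ^ δ * R ^ l := by
      rw [Real.mul_rpow hT0.le (by positivity)]
      congr 1
      rw [hRdef, ← Real.rpow_natCast (p : ℝ) l, ← Real.rpow_mul hp0.le, mul_comm,
        Real.rpow_mul hp0.le, Real.rpow_natCast]
    have e2 : T ^ d + (p : ℝ) ^ (l * (n - 1)) ≤ 2 * T ^ d := by
      linarith [hA l hlk]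
    calc C₁ * (T * (p : ℝ) ^ l) ^ δ * (T ^ d + (p : ℝ) ^ (l * (n - 1)))
        ≤ C₁ * (T * (p : ℝ) ^ l) ^ δ * (2 * T ^ d) := by
          apply mul_le_mul_of_nonneg_left e2
          positivity
      _ = 2 * C₁ * T ^ (d + δ) * R ^ l := by
          rw [e1, Real.rpow_add hT0]
          ring
  -- Step 4 : geometric sum
  have geo : ∑ l ∈ Finset.range (k + 1), R ^ l ≤ R ^ (k + 1) / (R - 1) := by
    rw [geom_sum_eq (ne_of_gt hR1)]
    have h1 : R ^ (k + 1) - 1 ≤ R ^ (k + 1) := sub_le_self _ zero_le_one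
    have h2 : (0 : ℝ) < R - 1 := by linarith
    exact div_le_div_of_nonneg_right h1 h2.le |>.trans_eq rfl
  have step4 : ∑ l ∈ Finset.range (k + 1), (2 * C₁ * T ^ (d + δ)) * R ^ l ≤
      (2 * C₁ * T ^ (d + δ)) * (R ^ (k + 1) / (R - 1)) := by
    rw [← Finset.mul_sum]
    apply mul_le_mul_of_nonneg_left geo
    positivity
  -- assemble the chain
  have chain : (S.card : ℝ) * (c * P0) ≤ (2 * C₁ * T ^ (d + δ)) * (R ^ (k + 1) / (R - 1)) :=
    le_trans step1 (le_trans step2 (le_trans step3 step4))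
  -- final comparison with C₂ * T^E
  set E : ℝ := d * (1 - 2 * θ₀ / ((n : ℝ) - 1)) + δ * (1 + d / ((n : ℝ) - 1)) with hEdef
  clear_value E
  have hRk : R ^ k = (p : ℝ) ^ ((k : ℝ) * δ) := by
    rw [hRdef, ← Real.rpow_natCast ((p : ℝ) ^ δ) k, ← Real.rpow_mul hp0.le, mul_comm]
  have hEexp : T ^ E * T ^ (2 * d * θ₀ / ((n : ℝ) - 1)) = T ^ (d + δ) * T ^ (d * δ / ((n : ℝ) - 1)) := by
    rw [← Real.rpow_add hT0, ← Real.rpow_add hT0]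
    congr 1
    rw [hEdef]
    field_simp
    ring
  have hTE : (0 : ℝ) < T ^ E := Real.rpow_pos_of_pos hT0 _
  have final : (2 * C₁ * T ^ (d + δ)) * (R ^ (k + 1) / (R - 1)) ≤ C₂ * T ^ E * (c * P0) := by
    have hRm1 : (0 : ℝ) < R - 1 := by linarith
    have lhs_eq : (2 * C₁ * T ^ (d + δ)) * (R ^ (k + 1) / (R - 1)) =
        (2 * C₁ * R / (R - 1)) * (T ^ (d + δ) * R ^ k) := by
      rw [pow_succ]
      field_simp
    have rhs_eq : C₂ * T ^ E * (c * P0) =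
        (2 * C₁ * R / (R - 1)) * ((p : ℝ) ^ ((n : ℝ) - 1) * P0 * T ^ E) := by
      rw [hC₂def]
      field_simp
    rw [lhs_eq, rhs_eq]
    apply mul_le_mul_of_nonneg_left _ (by positivity)
    calc T ^ (d + δ) * R ^ k ≤ T ^ (d + δ) * T ^ (d * δ / ((n : ℝ) - 1)) := by
          rw [hRk]
          apply mul_le_mul_of_nonneg_left hB (by positivity)
      _ = T ^ E * T ^ (2 * d * θ₀ / ((n : ℝ) - 1)) := hEexp.symm
      _ ≤ T ^ E * ((p : ℝ) ^ ((n : ℝ) - 1) * P0) := by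
          apply mul_le_mul_of_nonneg_left hC hTE.le
      _ = (p : ℝ) ^ ((n : ℝ) - 1) * P0 * T ^ E := by ring
  have main : (S.card : ℝ) * (c * P0) ≤ C₂ * T ^ E * (c * P0) := le_trans chain final
  have hcP0 : (0 : ℝ) < c * P0 := mul_pos hc hP0
  rw [hcard]
  exact le_of_mul_le_mul_right main hcP0
end

section
/- Define θ(1) = 0, θ(2) = 7/64, θ(3) = 5/14, θ(4) = 9/22, and θ(a) = 1/2 − 1/(a² + 1) for integers a ≥ 5. Then for all integers n ≥ 2 and a, b ≥ 1 with a·b = n, setting β := (n−1)/(n−1−2θ(n)) (which is well defined since θ(n) < (n−1)/2), one has β·(n+2)·(n−1−(b−1)−2θ(a)) − (a+2)(a−1) ≥ 0. -/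
noncomputable section

/-- The best known bounds `θ(a)` towards the Generalized Ramanujan Conjecture for
`GL(a)`. -/
def θGRC : ℕ → ℝ := fun a =>
  if a = 1 then 0
  else if a = 2 then 7 / 64
  else if a = 3 then 5 / 14
  else if a = 4 then 9 / 22
  else 1 / 2 - 1 / ((a : ℝ) ^ 2 + 1)

lemma θGRC_lt_half (a : ℕ) : θGRC a < 1 / 2 := by
  unfold θGRC
  split_ifs <;> norm_num
  positivity

lemma θGRC_nonneg (a : ℕ) (ha : 1 ≤ a) : 0 ≤ θGRC a := by
  unfold θGRC
  split_ifs <;> try norm_num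
  have h1 : (1 : ℝ) ≤ (a : ℝ) := by exact_mod_cast ha
  have h2 : (2 : ℝ) ≤ (a : ℝ) ^ 2 + 1 := by nlinarith
  have h3 : ((a : ℝ) ^ 2 + 1)⁻¹ ≤ (2 : ℝ)⁻¹ :=
    inv_anti₀ (by norm_num) h2
  have h4 : ((2 : ℝ))⁻¹ = 1 / 2 := by norm_num
  linarith [h3, h4.le]

/-- The inequality (eq: equation ab) governing the contribution of the discrete spectrum
of shape `(a, b)`: with `β = (n-1)/(n-1-2θ(n))`, for all `a, b ≥ 1` with `a b = n` one has
`β (n+2) (n-1-(b-1)-2θ(a)) - (a+2)(a-1) ≥ 0`. -/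
theorem stmt12 (n a b : ℕ) (hn : 2 ≤ n) (ha : 1 ≤ a) (hb : 1 ≤ b) (hab : a * b = n) :
    0 ≤ ((n : ℝ) - 1) / ((n : ℝ) - 1 - 2 * θGRC n) * ((n : ℝ) + 2) *
          ((n : ℝ) - 1 - ((b : ℝ) - 1) - 2 * θGRC a) -
        ((a : ℝ) + 2) * ((a : ℝ) - 1) := by
  have hs0 : 0 ≤ θGRC n := θGRC_nonneg n (by omega)
  have hs1 : θGRC n < 1 / 2 := θGRC_lt_half n
  have ht0 : 0 ≤ θGRC a := θGRC_nonneg a ha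
  have ht1 : θGRC a < 1 / 2 := θGRC_lt_half a
  have hn' : (2 : ℝ) ≤ (n : ℝ) := by exact_mod_cast hn
  have hd : 0 < (n : ℝ) - 1 - 2 * θGRC n := by linarith
  have hβ : 1 ≤ ((n : ℝ) - 1) / ((n : ℝ) - 1 - 2 * θGRC n) := by
    rw [le_div_iff₀ hd]; linarith
  have hnab : (n : ℝ) = (a : ℝ) * (b : ℝ) := by exact_mod_cast hab.symm
  rcases eq_or_lt_of_le ha with h1 | ha2
  · -- a = 1
    have ha1 : a = 1 := h1.symm
    subst ha1
    have hbn : b = n := by omega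
    subst hbn
    have hθ1 : θGRC 1 = 0 := by norm_num [θGRC]
    rw [hθ1]
    ring_nf
    nlinarith
  · rcases eq_or_lt_of_le hb with h1 | hb2
    · -- b = 1
      have hb1 : b = 1 := h1.symm
      subst hb1
      have han : a = n := by omega
      subst han
      have key : ((a : ℝ) - 1) / ((a : ℝ) - 1 - 2 * θGRC a) * ((a : ℝ) + 2) *
          ((a : ℝ) - 1 - (((1 : ℕ) : ℝ) - 1) - 2 * θGRC a) =
          ((a : ℝ) + 2) * ((a : ℝ) - 1) := by
        push_cast
        field_simp
        ring
      rw [key]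
      linarith
    · -- a ≥ 2, b ≥ 2
      have ha' : (2 : ℝ) ≤ (a : ℝ) := by exact_mod_cast ha2
      have hb' : (2 : ℝ) ≤ (b : ℝ) := by exact_mod_cast hb2
      set X : ℝ := (n : ℝ) - 1 - ((b : ℝ) - 1) - 2 * θGRC a with hX
      have hX1 : 1 ≤ X := by
        rw [hX, hnab]; nlinarith
      have e1 : 2 * (a : ℝ) - 3 ≤ (b : ℝ) * ((a : ℝ) - 1) - 2 * θGRC a := by
        nlinarith
      have e2 : 2 * (a : ℝ) + 2 ≤ (a : ℝ) * (b : ℝ) + 2 := by nlinarith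
      have e3 : (0 : ℝ) ≤ 2 * (a : ℝ) - 3 := by linarith
      have e4 : (2 * (a : ℝ) + 2) * (2 * (a : ℝ) - 3) ≤
          ((a : ℝ) * (b : ℝ) + 2) * ((b : ℝ) * ((a : ℝ) - 1) - 2 * θGRC a) :=
        mul_le_mul e2 e1 e3 (by nlinarith)
      have hNX : ((a : ℝ) + 2) * ((a : ℝ) - 1) ≤ ((n : ℝ) + 2) * X := by
        rw [hX, hnab]
        nlinarith [e4, sq_nonneg ((a : ℝ) - 2)]
      have h0NX : 0 ≤ ((n : ℝ) + 2) * X := by positivity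
      nlinarith [mul_nonneg (sub_nonneg.2 hβ) h0NX]
end
end

section
/- Define θ(1) = 0, θ(2) = 7/64, θ(3) = 5/14, θ(4) = 9/22, and θ(a) = 1/2 − 1/(a² + 1) for integers a ≥ 5, and set F(a, b, n) := 2 + (n+2)(n − b − 2θ(a)) − a(a+1) − (n − ab)(n − ab + 1). Then for all positive integers n ≥ 2 and a, b with a·b < n, one has F(a, b, n) ≥ 0. -/
noncomputable section

/-- `F(a, b, n) = 2 + (n+2)(n - b - 2θ(a)) - a(a+1) - (n - ab)(n - ab + 1)`. -/
def Fabn (a b n : ℕ) : ℝ :=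
  2 + ((n : ℝ) + 2) * ((n : ℝ) - (b : ℝ) - 2 * θGRC a) - (a : ℝ) * ((a : ℝ) + 1) -
    ((n : ℝ) - (a : ℝ) * (b : ℝ)) * ((n : ℝ) - (a : ℝ) * (b : ℝ) + 1)

/-- The concluding lemma of Section 7.2: for all positive integers `n ≥ 2` and `a, b`
with `a b < n` one has `F(a, b, n) ≥ 0`. -/
theorem stmt13 (n a b : ℕ) (hn : 2 ≤ n) (ha : 1 ≤ a) (hb : 1 ≤ b) (hab : a * b < n) :
    0 ≤ Fabn a b n := by
  have hN : (a : ℝ) * b + 1 ≤ n := by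
    have : a * b + 1 ≤ n := hab
    exact_mod_cast this
  have hB : (1 : ℝ) ≤ b := by exact_mod_cast hb
  unfold Fabn θGRC
  rcases Nat.lt_or_ge a 5 with h5 | h5
  · interval_cases a
    · norm_num at hN ⊢
      nlinarith [mul_nonneg (sub_nonneg.2 hN) (sub_nonneg.2 hB),
        mul_nonneg (sub_nonneg.2 hB) (sub_nonneg.2 hB), sub_nonneg.2 hN, sub_nonneg.2 hB,
        mul_nonneg (sub_nonneg.2 hB) (by linarith : (0:ℝ) ≤ (b:ℝ))]
    · norm_num at hN ⊢
      nlinarith [mul_nonneg (sub_nonneg.2 hN) (sub_nonneg.2 hB),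
        mul_nonneg (sub_nonneg.2 hB) (sub_nonneg.2 hB), sub_nonneg.2 hN, sub_nonneg.2 hB,
        mul_nonneg (sub_nonneg.2 hB) (by linarith : (0:ℝ) ≤ (b:ℝ))]
    · norm_num at hN ⊢
      nlinarith [mul_nonneg (sub_nonneg.2 hN) (sub_nonneg.2 hB),
        mul_nonneg (sub_nonneg.2 hB) (sub_nonneg.2 hB), sub_nonneg.2 hN, sub_nonneg.2 hB,
        mul_nonneg (sub_nonneg.2 hB) (by linarith : (0:ℝ) ≤ (b:ℝ))]
    · norm_num at hN ⊢
      nlinarith [mul_nonneg (sub_nonneg.2 hN) (sub_nonneg.2 hB),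
        mul_nonneg (sub_nonneg.2 hB) (sub_nonneg.2 hB), sub_nonneg.2 hN, sub_nonneg.2 hB,
        mul_nonneg (sub_nonneg.2 hB) (by linarith : (0:ℝ) ≤ (b:ℝ))]
  · have h1 : a ≠ 1 := by omega
    have h2 : a ≠ 2 := by omega
    have h3 : a ≠ 3 := by omega
    have h4 : a ≠ 4 := by omega
    simp only [h1, h2, h3, h4, if_false]
    have hA : (5 : ℝ) ≤ a := by exact_mod_cast h5
    have hpos : (0 : ℝ) < (a : ℝ) ^ 2 + 1 := by positivity
    have hθ : 1 / 2 - 1 / ((a : ℝ) ^ 2 + 1) ≤ 1 / 2 := by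
      have : 0 < 1 / ((a : ℝ) ^ 2 + 1) := by positivity
      linarith
    have key : 0 ≤ 2 + ((n : ℝ) + 2) * ((n : ℝ) - b - 1) - (a : ℝ) * (a + 1) -
        ((n : ℝ) - a * b) * ((n : ℝ) - a * b + 1) := by
      nlinarith [mul_nonneg (sub_nonneg.2 hN) (mul_nonneg (by linarith : (0:ℝ) ≤ 2*(a:ℝ)-1) (by linarith : (0:ℝ) ≤ (b:ℝ))),
        mul_nonneg (mul_nonneg (by linarith : (0:ℝ) ≤ (a:ℝ)) (by linarith : (0:ℝ) ≤ (a:ℝ)-1)) (mul_nonneg (by linarith : (0:ℝ) ≤ (b:ℝ)) (by linarith : (0:ℝ) ≤ (b:ℝ)-1)),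
        mul_nonneg (by linarith : (0:ℝ) ≤ (a:ℝ)-3) (by linarith : (0:ℝ) ≤ (b:ℝ)-1)]
    have hn2 : (0:ℝ) ≤ (n:ℝ) + 2 := by positivity
    nlinarith [mul_le_mul_of_nonneg_left hθ hn2]
end
end
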